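/- arXiv:2205.14689 — 5 statements merged into one kernel-verified Lean document; each statement's English description precedes it below -/
import Mathlib

section
/- Let d be a squarefree integer with d ≠ 0, 1, let K = ℚ(√d) and let O_K be its ring of integers. If r, s, t ∈ O_K satisfy r + s + t = 2 and r·s·t = 2, then at least one of r, s, t is a rational number (equivalently, at least one of r, s, t lies in ℤ, since it is an algebraic integer in ℚ). -/
set_option maxHeartbeats 1000000

open IntermediateField Polynomial



/-- d squarefree, ≠ 0,1 implies no rational square root -/
lemma no_rat_sqrt (d : ℤ) (hd : Squarefree d) (hd1 : d ≠ 1) :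
    ∀ q : ℚ, q ^ 2 ≠ (d : ℚ) := by
  intro q hq
  have hint : IsIntegral ℤ q := by
    refine ⟨X ^ 2 - C d, monic_X_pow_sub_C d (by norm_num), ?_⟩
    rw [eval₂_sub, eval₂_pow, eval₂_X, eval₂_C]
    simpa using sub_eq_zero_of_eq hq
  obtain ⟨n, hn⟩ := IsIntegrallyClosed.isIntegral_iff.mp hint
  have hn2 : (n : ℚ) ^ 2 = (d : ℚ) := by rw [← hq, ← hn]; norm_num
  have hnd : n ^ 2 = d := by exact_mod_cast hn2
  have : IsUnit n := hd n (by rw [← hnd]; ring_nf; exact dvd_refl _)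
  rw [Int.isUnit_iff] at this
  rcases this with h | h <;> simp [h] at hnd <;> omega

lemma alpha_irrat (d : ℤ) (hd : Squarefree d) (hd1 : d ≠ 1) (α : ℂ) (hα : α ^ 2 = (d : ℂ)) :
    ∀ q : ℚ, α ≠ (q : ℂ) := by
  intro q hq
  apply no_rat_sqrt d hd hd1 q
  have : ((q ^ 2 : ℚ) : ℂ) = ((d : ℚ) : ℂ) := by push_cast; rw [← hq]; exact_mod_cast hα
  exact_mod_cast this

/-- linear independence of 1, α over ℚ -/
lemma lin_indep (d : ℤ) (hd : Squarefree d) (hd1 : d ≠ 1) (α : ℂ) (hα : α ^ 2 = (d : ℂ))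
    (a b : ℚ) (h : (a : ℂ) + (b : ℂ) * α = 0) : a = 0 ∧ b = 0 := by
  by_cases hb : b = 0
  · subst hb; simp at h; exact ⟨by exact_mod_cast h, rfl⟩
  · exfalso
    apply alpha_irrat d hd hd1 α hα (-a / b)
    have hbC : (b : ℂ) ≠ 0 := by exact_mod_cast hb
    have hab : α * (b : ℂ) = -(a : ℂ) := by linear_combination h
    push_cast
    rw [eq_div_iff hbC]
    linear_combination hab

/-- elements of ℚ⟮α⟯ have coordinates -/
lemma coords (d : ℤ) (α : ℂ) (hα : α ^ 2 = (d : ℂ)) (x : ℂ) (hx : x ∈ ℚ⟮α⟯) :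
    ∃ a b : ℚ, x = (a : ℂ) + (b : ℂ) * α := by
  have hint : IsIntegral ℚ α := by
    refine ⟨X ^ 2 - C (d : ℚ), monic_X_pow_sub_C _ (by norm_num), ?_⟩
    rw [eval₂_sub, eval₂_pow, eval₂_X, eval₂_C]
    simpa using sub_eq_zero_of_eq hα
  have hx' : x ∈ Algebra.adjoin ℚ {α} :=
    (IntermediateField.adjoin_simple_toSubalgebra_of_isAlgebraic hint.isAlgebraic) ▸ hx
  clear hx
  induction hx' using Algebra.adjoin_induction with
  | mem y hy =>
    rcases hy with rfl
    exact ⟨0, 1, by simp⟩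
  | algebraMap r => exact ⟨r, 0, by simp⟩
  | add y z hy hz ihy ihz =>
    obtain ⟨a1, b1, rfl⟩ := ihy
    obtain ⟨a2, b2, rfl⟩ := ihz
    exact ⟨a1 + a2, b1 + b2, by push_cast; ring⟩
  | mul y z hy hz ihy ihz =>
    obtain ⟨a1, b1, rfl⟩ := ihy
    obtain ⟨a2, b2, rfl⟩ := ihz
    exact ⟨a1 * a2 + d * b1 * b2, a1 * b2 + a2 * b1, by push_cast; linear_combination (b1 : ℂ) * b2 * hα⟩

lemma int_coords (d : ℤ) (hd : Squarefree d) (hd0 : d ≠ 0) (hd1 : d ≠ 1)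
    (α : ℂ) (hα : α ^ 2 = (d : ℂ)) (a b : ℚ) (hb : b ≠ 0)
    (hx : IsIntegral ℤ ((a : ℂ) + (b : ℂ) * α)) :
    ∃ T B N : ℤ, B ≠ 0 ∧ (T : ℚ) = 2 * a ∧ (B : ℚ) = 2 * b ∧ T ^ 2 - d * B ^ 2 = 4 * N := by
  set x : ℂ := (a : ℂ) + (b : ℂ) * α with hxdef
  have hxirr : ∀ q : ℚ, x ≠ (q : ℂ) := by
    intro q hq
    have : ((a - q : ℚ) : ℂ) + (b : ℂ) * α = 0 := by push_cast; rw [← hq]; ring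
    exact hb (lin_indep d hd hd1 α hα _ _ this).2
  set c0 : ℚ := a ^ 2 - d * b ^ 2 with hc0def
  set p : ℚ[X] := X ^ 2 - C (2 * a) * X + C c0 with hpdef
  have hproot : aeval x p = 0 := by
    simp only [hpdef, map_add, map_sub, map_mul, map_pow, aeval_X, aeval_C, eq_ratCast]
    rw [hc0def]
    push_cast
    linear_combination (b : ℂ) ^ 2 * hα
  have hpmonic : p.Monic :=
    monic_of_natDegree_le_of_coeff_eq_one 2 (by rw [hpdef]; compute_degree) (by rw [hpdef]; compute_degree!)
  have hpdeg : p.natDegree = 2 := by rw [hpdef]; compute_degree!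
  have hxQ : IsIntegral ℚ x := hx.tower_top
  have hdvd : minpoly ℚ x ∣ p := minpoly.dvd ℚ x hproot
  have hmmon : (minpoly ℚ x).Monic := minpoly.monic hxQ
  have hdle : (minpoly ℚ x).natDegree ≤ 2 := by
    rw [← hpdeg]; exact natDegree_le_of_dvd hdvd hpmonic.ne_zero
  have hdpos : 0 < (minpoly ℚ x).natDegree := minpoly.natDegree_pos hxQ
  have hmp : minpoly ℚ x = p := by
    rcases Nat.lt_or_ge (minpoly ℚ x).natDegree 2 with h2 | h2
    · exfalso
      have h1 : (minpoly ℚ x).natDegree ≤ 1 := by omega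
      have := Polynomial.eq_X_add_C_of_natDegree_le_one h1
      have hc1 : (minpoly ℚ x).coeff 1 = 1 := by
        have : (minpoly ℚ x).natDegree = 1 := by omega
        rw [← this]; exact hmmon
      rw [hc1, map_one, one_mul] at this
      have haev := minpoly.aeval ℚ x
      rw [this] at haev
      simp only [map_add, aeval_X, aeval_C] at haev
      rw [eq_ratCast] at haev
      exact hxirr (-(minpoly ℚ x).coeff 0) (by push_cast; linear_combination haev)
    · obtain ⟨q, hq⟩ := hdvd
      have hqmon : q.Monic := hmmon.of_mul_monic_left (hq ▸ hpmonic)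
      have hqdeg : q.natDegree = 0 := by
        have := hpdeg
        rw [hq, natDegree_mul hmmon.ne_zero hqmon.ne_zero] at this
        omega
      have : q = 1 := hqmon.natDegree_eq_zero.mp hqdeg
      rw [hq, this, mul_one]
  have hmap : (minpoly ℤ x).map (algebraMap ℤ ℚ) = p := by
    rw [← hmp]
    have := minpoly.isIntegrallyClosed_eq_field_fractions ℚ ℂ (S := ℂ) hx
    simpa using this.symm
  -- extract coefficients
  have hc1 : ((minpoly ℤ x).coeff 1 : ℚ) = -(2 * a) := by
    have := congrArg (fun f => Polynomial.coeff f 1) hmap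
    simp only [coeff_map] at this
    rw [hpdef] at this
    simpa [coeff_X_pow, coeff_C, eq_ratCast] using this
  have hc0 : ((minpoly ℤ x).coeff 0 : ℚ) = c0 := by
    have := congrArg (fun f => Polynomial.coeff f 0) hmap
    simp only [coeff_map] at this
    rw [hpdef] at this
    simpa [coeff_X_pow, coeff_C, eq_ratCast] using this
  set T : ℤ := -(minpoly ℤ x).coeff 1 with hTdef
  set N : ℤ := (minpoly ℤ x).coeff 0 with hNdef
  have hT : (T : ℚ) = 2 * a := by push_cast [hTdef]; linarith [hc1]
  have hN : (N : ℚ) = a ^ 2 - d * b ^ 2 := by rw [hc0, hc0def]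
  -- now get B
  have hdq : ((d : ℚ) * (2 * b)) ^ 2 = ((d * (T ^ 2 - 4 * N) : ℤ) : ℚ) := by
    push_cast
    linear_combination (-(d:ℚ) * ((T:ℚ) + 2 * a)) * hT + 4 * (d:ℚ) * hN
  have hWint : IsIntegral ℤ ((d : ℚ) * (2 * b)) := by
    refine ⟨X ^ 2 - C (d * (T ^ 2 - 4 * N)), monic_X_pow_sub_C _ (by norm_num), ?_⟩
    rw [eval₂_sub, eval₂_pow, eval₂_X, eval₂_C, sub_eq_zero]
    exact_mod_cast hdq
  obtain ⟨W, hW⟩ := IsIntegrallyClosed.isIntegral_iff.mp hWint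
  have hWq : (W : ℚ) = (d : ℚ) * (2 * b) := by exact_mod_cast hW
  have hW2 : W ^ 2 = d * (T ^ 2 - 4 * N) := by
    have : ((W ^ 2 : ℤ) : ℚ) = ((d * (T ^ 2 - 4 * N) : ℤ) : ℚ) := by
      push_cast [hWq]; push_cast at hdq; linarith [hdq]
    exact_mod_cast this
  have hdW : d ∣ W := by
    refine (hd.dvd_pow_iff_dvd (n := 2) (by norm_num)).mp ⟨T ^ 2 - 4 * N, hW2⟩
  obtain ⟨B, hB⟩ := hdW
  refine ⟨T, B, N, ?_, hT, ?_, ?_⟩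
  · rintro rfl
    rw [mul_zero] at hB
    rw [hB] at hWq
    simp at hWq
    rcases hWq with h | h
    · exact hd0 (by exact_mod_cast h)
    · exact hb h
  · have hd0' : (d : ℚ) ≠ 0 := by exact_mod_cast hd0
    have h3 : (d : ℚ) * (B : ℚ) = (d : ℚ) * (2 * b) := by
      rw [← hWq, hB]; push_cast; ring
    exact mul_left_cancel₀ hd0' h3
  · -- T^2 - d B^2 = 4N : from W = d B, W² = d(T²−4N): d² B² = d(T²−4N) ⇒ d B² = T²−4N
    have h1 : d * (d * B ^ 2) = d * (T ^ 2 - 4 * N) := by rw [← hW2, hB]; ring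
    have h2 : d * B ^ 2 = T ^ 2 - 4 * N := mul_left_cancel₀ hd0 h1
    omega

lemma sqpos (B : ℤ) (hB : B ≠ 0) : 1 ≤ B ^ 2 := by
  rcases lt_or_gt_of_ne hB with h | h <;> nlinarith

lemma killdd (d B C p c : ℤ) (hd2 : 2 ≤ d) (h1 : d * B ^ 2 = p) (h2 : d * C ^ 2 = c)
    (hg : Int.gcd p c = 1) : False := by
  have hdp : d ∣ p := ⟨B ^ 2, h1.symm⟩
  have hdc : d ∣ c := ⟨C ^ 2, h2.symm⟩
  have hh := Int.dvd_coe_gcd hdp hdc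
  rw [hg] at hh
  have := Int.le_of_dvd one_pos hh
  omega

lemma endB1 (d T1 B1 T2 B2 T3 B3 k m : ℤ)
    (hd : Squarefree d) (hd2 : 2 ≤ d)
    (hB1 : B1 ≠ 0) (hB2 : B2 ≠ 0) (hB3 : B3 ≠ 0)
    (hn1 : T1 ^ 2 - d * B1 ^ 2 = 4 * (-1))
    (hn2 : T2 ^ 2 - d * B2 ^ 2 = 4 * (-1))
    (hn3 : T3 ^ 2 - d * B3 ^ 2 = 4 * (4))
    (hT : T1 + T2 + T3 = 4) (hB : B1 + B2 + B3 = 0)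
    (hE4 : T1 * T2 * B3 + T1 * B2 * T3 + B1 * T2 * T3 + d * (B1 * B2 * B3) = 0)
    (hT3 : T3 ≤ -1)
    (hR1 : (-1) + (-1) + k = 4 - 2 * T3 + (4))
    (hR2 : T1 * T2 = m + k)
    (hmrel : 2 * m = T3 * ((-1) * (-1))) : False := by
  have hk : k = 10 - 2 * T3 := by omega
  have hm2 : 2 * m = 1 * T3 := by linear_combination hmrel
  have hfact : (1 - T3 - (T1 - T2)) * (1 - T3 + (T1 - T2)) = 25 := by
    linear_combination 4 * hR2 + 2 * hm2 + 4 * hk + (T3 - T1 - T2 - 4) * hT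
  have hwlt : T1 - T2 < 1 - T3 := by
    by_contra hcon
    push_neg at hcon
    nlinarith [hfact, mul_nonneg (show (0:ℤ) ≤ (T1 - T2) - (1 - T3) by omega) (show (0:ℤ) ≤ (T1 - T2) + (1 - T3) by omega)]
  have hwgt : -(1 - T3) < T1 - T2 := by
    by_contra hcon
    push_neg at hcon
    nlinarith [hfact, mul_nonneg (show (0:ℤ) ≤ -(T1 - T2) - (1 - T3) by omega) (show (0:ℤ) ≤ -(T1 - T2) + (1 - T3) by omega)]
  obtain ⟨a, ha⟩ : ∃ x, x = 1 - T3 - (T1 - T2) := ⟨_, rfl⟩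
  obtain ⟨b, hb⟩ : ∃ x, x = 1 - T3 + (T1 - T2) := ⟨_, rfl⟩
  have hab : a * b = 25 := by rw [ha, hb]; linear_combination hfact
  have ha1 : 1 ≤ a := by omega
  have hb1 : 1 ≤ b := by omega
  have ha2 : a ≤ 25 := by nlinarith [mul_nonneg (show (0:ℤ) ≤ a by omega) (show (0:ℤ) ≤ b - 1 by omega)]
  interval_cases a <;> (try omega)
  · have e3 : T3 = -12 := by omega
    subst e3
    have e1 : T1 = 14 := by omega
    subst e1
    have e2 : T2 = 2 := by omega
    subst e2
    have k1 : d * B1 ^ 2 = 200 := by linarith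
    have k2 : d * B2 ^ 2 = 8 := by linarith
    have k3 : d * B3 ^ 2 = 128 := by linarith
    have hs1 : 1 ≤ B2 ^ 2 := sqpos B2 (by assumption)
    have hb2a : B2 ^ 2 ≤ 4 := by nlinarith
    have hb2b : -2 ≤ B2 ∧ B2 ≤ 2 := by constructor <;> nlinarith
    obtain ⟨u1, u2⟩ := hb2b
    interval_cases B2 <;> (try omega)
    · have hdv : d = 2 := by omega
      subst hdv
      have q1 : B1 ^ 2 = 100 := by omega
      have q3 : B3 ^ 2 = 64 := by omega
      have hb1b : -10 ≤ B1 ∧ B1 ≤ 10 := by constructor <;> nlinarith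
      have hb3b : -8 ≤ B3 ∧ B3 ≤ 8 := by constructor <;> nlinarith
      obtain ⟨v1, v2⟩ := hb1b
      obtain ⟨w1, w2⟩ := hb3b
      interval_cases B1 <;> (try omega) <;> interval_cases B3 <;> omega
    · have hdv : d = 8 := by omega
      have h2 := hd 2 (show 2 * 2 ∣ d by rw [hdv]; norm_num)
      rw [Int.isUnit_iff] at h2
      omega
    · have hdv : d = 8 := by omega
      have h2 := hd 2 (show 2 * 2 ∣ d by rw [hdv]; norm_num)
      rw [Int.isUnit_iff] at h2
      omega
    · have hdv : d = 2 := by omega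
      subst hdv
      have q1 : B1 ^ 2 = 100 := by omega
      have q3 : B3 ^ 2 = 64 := by omega
      have hb1b : -10 ≤ B1 ∧ B1 ≤ 10 := by constructor <;> nlinarith
      have hb3b : -8 ≤ B3 ∧ B3 ≤ 8 := by constructor <;> nlinarith
      obtain ⟨v1, v2⟩ := hb1b
      obtain ⟨w1, w2⟩ := hb3b
      interval_cases B1 <;> (try omega) <;> interval_cases B3 <;> omega
  · have e3 : T3 = -4 := by omega
    subst e3
    have k3 : d * B3 ^ 2 = 0 := by linarith
    nlinarith [mul_le_mul_of_nonneg_left (sqpos B3 hB3) (show (0:ℤ) ≤ d by omega)]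
  · have e3 : T3 = -12 := by omega
    subst e3
    have e1 : T1 = 2 := by omega
    subst e1
    have e2 : T2 = 14 := by omega
    subst e2
    have k1 : d * B2 ^ 2 = 200 := by linarith
    have k2 : d * B1 ^ 2 = 8 := by linarith
    have k3 : d * B3 ^ 2 = 128 := by linarith
    have hs1 : 1 ≤ B1 ^ 2 := sqpos B1 (by assumption)
    have hb2a : B1 ^ 2 ≤ 4 := by nlinarith
    have hb2b : -2 ≤ B1 ∧ B1 ≤ 2 := by constructor <;> nlinarith
    obtain ⟨u1, u2⟩ := hb2b
    interval_cases B1 <;> (try omega)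
    · have hdv : d = 2 := by omega
      subst hdv
      have q1 : B2 ^ 2 = 100 := by omega
      have q3 : B3 ^ 2 = 64 := by omega
      have hb1b : -10 ≤ B2 ∧ B2 ≤ 10 := by constructor <;> nlinarith
      have hb3b : -8 ≤ B3 ∧ B3 ≤ 8 := by constructor <;> nlinarith
      obtain ⟨v1, v2⟩ := hb1b
      obtain ⟨w1, w2⟩ := hb3b
      interval_cases B2 <;> (try omega) <;> interval_cases B3 <;> omega
    · have hdv : d = 8 := by omega
      have h2 := hd 2 (show 2 * 2 ∣ d by rw [hdv]; norm_num)
      rw [Int.isUnit_iff] at h2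
      omega
    · have hdv : d = 8 := by omega
      have h2 := hd 2 (show 2 * 2 ∣ d by rw [hdv]; norm_num)
      rw [Int.isUnit_iff] at h2
      omega
    · have hdv : d = 2 := by omega
      subst hdv
      have q1 : B2 ^ 2 = 100 := by omega
      have q3 : B3 ^ 2 = 64 := by omega
      have hb1b : -10 ≤ B2 ∧ B2 ≤ 10 := by constructor <;> nlinarith
      have hb3b : -8 ≤ B3 ∧ B3 ≤ 8 := by constructor <;> nlinarith
      obtain ⟨v1, v2⟩ := hb1b
      obtain ⟨w1, w2⟩ := hb3b
      interval_cases B2 <;> (try omega) <;> interval_cases B3 <;> omega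

lemma endB2 (d T1 B1 T2 B2 T3 B3 k m : ℤ)
    (hd : Squarefree d) (hd2 : 2 ≤ d)
    (hB1 : B1 ≠ 0) (hB2 : B2 ≠ 0) (hB3 : B3 ≠ 0)
    (hn1 : T1 ^ 2 - d * B1 ^ 2 = 4 * (-1))
    (hn2 : T2 ^ 2 - d * B2 ^ 2 = 4 * (-2))
    (hn3 : T3 ^ 2 - d * B3 ^ 2 = 4 * (2))
    (hT : T1 + T2 + T3 = 4) (hB : B1 + B2 + B3 = 0)
    (hE4 : T1 * T2 * B3 + T1 * B2 * T3 + B1 * T2 * T3 + d * (B1 * B2 * B3) = 0)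
    (hT3 : T3 ≤ -1)
    (hR1 : (-1) + (-2) + k = 4 - 2 * T3 + (2))
    (hR2 : T1 * T2 = m + k)
    (hmrel : 2 * m = T3 * ((-1) * (-2))) : False := by
  have hk : k = 9 - 2 * T3 := by omega
  have hm2 : 2 * m = 2 * T3 := by linear_combination hmrel
  have hfact : (2 - T3 - (T1 - T2)) * (2 - T3 + (T1 - T2)) = 24 := by
    linear_combination 4 * hR2 + 2 * hm2 + 4 * hk + (T3 - T1 - T2 - 4) * hT
  have hwlt : T1 - T2 < 2 - T3 := by
    by_contra hcon
    push_neg at hcon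
    nlinarith [hfact, mul_nonneg (show (0:ℤ) ≤ (T1 - T2) - (2 - T3) by omega) (show (0:ℤ) ≤ (T1 - T2) + (2 - T3) by omega)]
  have hwgt : -(2 - T3) < T1 - T2 := by
    by_contra hcon
    push_neg at hcon
    nlinarith [hfact, mul_nonneg (show (0:ℤ) ≤ -(T1 - T2) - (2 - T3) by omega) (show (0:ℤ) ≤ -(T1 - T2) + (2 - T3) by omega)]
  obtain ⟨a, ha⟩ : ∃ x, x = 2 - T3 - (T1 - T2) := ⟨_, rfl⟩
  obtain ⟨b, hb⟩ : ∃ x, x = 2 - T3 + (T1 - T2) := ⟨_, rfl⟩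
  have hab : a * b = 24 := by rw [ha, hb]; linear_combination hfact
  have ha1 : 1 ≤ a := by omega
  have hb1 : 1 ≤ b := by omega
  have ha2 : a ≤ 24 := by nlinarith [mul_nonneg (show (0:ℤ) ≤ a by omega) (show (0:ℤ) ≤ b - 1 by omega)]
  interval_cases a <;> (try omega)
  · have e3 : T3 = -5 := by omega
    subst e3
    have e1 : T1 = 7 := by omega
    subst e1
    have e2 : T2 = 2 := by omega
    subst e2
    have k1 : d * B1 ^ 2 = 53 := by linarith
    have k2 : d * B2 ^ 2 = 12 := by linarith
    exact killdd d B1 B2 53 12 hd2 k1 k2 (by norm_num)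
  · have e3 : T3 = -3 := by omega
    subst e3
    have e1 : T1 = 4 := by omega
    subst e1
    have e2 : T2 = 3 := by omega
    subst e2
    have k1 : d * B1 ^ 2 = 20 := by linarith
    have k2 : d * B2 ^ 2 = 17 := by linarith
    exact killdd d B1 B2 20 17 hd2 k1 k2 (by norm_num)
  · have e3 : T3 = -3 := by omega
    subst e3
    have e1 : T1 = 3 := by omega
    subst e1
    have e2 : T2 = 4 := by omega
    subst e2
    have k1 : d * B1 ^ 2 = 13 := by linarith
    have k2 : d * B2 ^ 2 = 24 := by linarith
    exact killdd d B1 B2 13 24 hd2 k1 k2 (by norm_num)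
  · have e3 : T3 = -5 := by omega
    subst e3
    have e1 : T1 = 2 := by omega
    subst e1
    have e2 : T2 = 7 := by omega
    subst e2
    have k1 : d * B1 ^ 2 = 8 := by linarith
    have k2 : d * B2 ^ 2 = 57 := by linarith
    exact killdd d B1 B2 8 57 hd2 k1 k2 (by norm_num)

lemma endB3 (d T1 B1 T2 B2 T3 B3 k m : ℤ)
    (hd : Squarefree d) (hd2 : 2 ≤ d)
    (hB1 : B1 ≠ 0) (hB2 : B2 ≠ 0) (hB3 : B3 ≠ 0)
    (hn1 : T1 ^ 2 - d * B1 ^ 2 = 4 * (-1))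
    (hn2 : T2 ^ 2 - d * B2 ^ 2 = 4 * (-4))
    (hn3 : T3 ^ 2 - d * B3 ^ 2 = 4 * (1))
    (hT : T1 + T2 + T3 = 4) (hB : B1 + B2 + B3 = 0)
    (hE4 : T1 * T2 * B3 + T1 * B2 * T3 + B1 * T2 * T3 + d * (B1 * B2 * B3) = 0)
    (hT3 : T3 ≤ -1)
    (hR1 : (-1) + (-4) + k = 4 - 2 * T3 + (1))
    (hR2 : T1 * T2 = m + k)
    (hmrel : 2 * m = T3 * ((-1) * (-4))) : False := by
  have hk : k = 10 - 2 * T3 := by omega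
  have hm2 : 2 * m = 4 * T3 := by linear_combination hmrel
  have hfact : (4 - T3 - (T1 - T2)) * (4 - T3 + (T1 - T2)) = 40 := by
    linear_combination 4 * hR2 + 2 * hm2 + 4 * hk + (T3 - T1 - T2 - 4) * hT
  have hwlt : T1 - T2 < 4 - T3 := by
    by_contra hcon
    push_neg at hcon
    nlinarith [hfact, mul_nonneg (show (0:ℤ) ≤ (T1 - T2) - (4 - T3) by omega) (show (0:ℤ) ≤ (T1 - T2) + (4 - T3) by omega)]
  have hwgt : -(4 - T3) < T1 - T2 := by
    by_contra hcon
    push_neg at hcon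
    nlinarith [hfact, mul_nonneg (show (0:ℤ) ≤ -(T1 - T2) - (4 - T3) by omega) (show (0:ℤ) ≤ -(T1 - T2) + (4 - T3) by omega)]
  obtain ⟨a, ha⟩ : ∃ x, x = 4 - T3 - (T1 - T2) := ⟨_, rfl⟩
  obtain ⟨b, hb⟩ : ∃ x, x = 4 - T3 + (T1 - T2) := ⟨_, rfl⟩
  have hab : a * b = 40 := by rw [ha, hb]; linear_combination hfact
  have ha1 : 1 ≤ a := by omega
  have hb1 : 1 ≤ b := by omega
  have ha2 : a ≤ 40 := by nlinarith [mul_nonneg (show (0:ℤ) ≤ a by omega) (show (0:ℤ) ≤ b - 1 by omega)]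
  interval_cases a <;> (try omega)
  · have e3 : T3 = -7 := by omega
    subst e3
    have e1 : T1 = 10 := by omega
    subst e1
    have e2 : T2 = 1 := by omega
    subst e2
    have k1 : d * B1 ^ 2 = 104 := by linarith
    have k2 : d * B2 ^ 2 = 17 := by linarith
    exact killdd d B1 B2 104 17 hd2 k1 k2 (by norm_num)
  · have e3 : T3 = -3 := by omega
    subst e3
    have e1 : T1 = 5 := by omega
    subst e1
    have e2 : T2 = 2 := by omega
    subst e2
    have k1 : d * B1 ^ 2 = 29 := by linarith
    have k2 : d * B2 ^ 2 = 20 := by linarith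
    exact killdd d B1 B2 29 20 hd2 k1 k2 (by norm_num)
  · have e3 : T3 = -3 := by omega
    subst e3
    have e1 : T1 = 2 := by omega
    subst e1
    have e2 : T2 = 5 := by omega
    subst e2
    have k1 : d * B1 ^ 2 = 8 := by linarith
    have k2 : d * B2 ^ 2 = 41 := by linarith
    exact killdd d B1 B2 8 41 hd2 k1 k2 (by norm_num)
  · have e3 : T3 = -7 := by omega
    subst e3
    have e1 : T1 = 1 := by omega
    subst e1
    have e2 : T2 = 10 := by omega
    subst e2
    have k1 : d * B1 ^ 2 = 5 := by linarith
    have k2 : d * B2 ^ 2 = 116 := by linarith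
    exact killdd d B1 B2 5 116 hd2 k1 k2 (by norm_num)

lemma endB4 (d T1 B1 T2 B2 T3 B3 k m : ℤ)
    (hd : Squarefree d) (hd2 : 2 ≤ d)
    (hB1 : B1 ≠ 0) (hB2 : B2 ≠ 0) (hB3 : B3 ≠ 0)
    (hn1 : T1 ^ 2 - d * B1 ^ 2 = 4 * (-2))
    (hn2 : T2 ^ 2 - d * B2 ^ 2 = 4 * (-1))
    (hn3 : T3 ^ 2 - d * B3 ^ 2 = 4 * (2))
    (hT : T1 + T2 + T3 = 4) (hB : B1 + B2 + B3 = 0)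
    (hE4 : T1 * T2 * B3 + T1 * B2 * T3 + B1 * T2 * T3 + d * (B1 * B2 * B3) = 0)
    (hT3 : T3 ≤ -1)
    (hR1 : (-2) + (-1) + k = 4 - 2 * T3 + (2))
    (hR2 : T1 * T2 = m + k)
    (hmrel : 2 * m = T3 * ((-2) * (-1))) : False := by
  have hk : k = 9 - 2 * T3 := by omega
  have hm2 : 2 * m = 2 * T3 := by linear_combination hmrel
  have hfact : (2 - T3 - (T1 - T2)) * (2 - T3 + (T1 - T2)) = 24 := by
    linear_combination 4 * hR2 + 2 * hm2 + 4 * hk + (T3 - T1 - T2 - 4) * hT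
  have hwlt : T1 - T2 < 2 - T3 := by
    by_contra hcon
    push_neg at hcon
    nlinarith [hfact, mul_nonneg (show (0:ℤ) ≤ (T1 - T2) - (2 - T3) by omega) (show (0:ℤ) ≤ (T1 - T2) + (2 - T3) by omega)]
  have hwgt : -(2 - T3) < T1 - T2 := by
    by_contra hcon
    push_neg at hcon
    nlinarith [hfact, mul_nonneg (show (0:ℤ) ≤ -(T1 - T2) - (2 - T3) by omega) (show (0:ℤ) ≤ -(T1 - T2) + (2 - T3) by omega)]
  obtain ⟨a, ha⟩ : ∃ x, x = 2 - T3 - (T1 - T2) := ⟨_, rfl⟩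
  obtain ⟨b, hb⟩ : ∃ x, x = 2 - T3 + (T1 - T2) := ⟨_, rfl⟩
  have hab : a * b = 24 := by rw [ha, hb]; linear_combination hfact
  have ha1 : 1 ≤ a := by omega
  have hb1 : 1 ≤ b := by omega
  have ha2 : a ≤ 24 := by nlinarith [mul_nonneg (show (0:ℤ) ≤ a by omega) (show (0:ℤ) ≤ b - 1 by omega)]
  interval_cases a <;> (try omega)
  · have e3 : T3 = -5 := by omega
    subst e3
    have e1 : T1 = 7 := by omega
    subst e1
    have e2 : T2 = 2 := by omega
    subst e2
    have k1 : d * B1 ^ 2 = 57 := by linarith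
    have k2 : d * B2 ^ 2 = 8 := by linarith
    exact killdd d B1 B2 57 8 hd2 k1 k2 (by norm_num)
  · have e3 : T3 = -3 := by omega
    subst e3
    have e1 : T1 = 4 := by omega
    subst e1
    have e2 : T2 = 3 := by omega
    subst e2
    have k1 : d * B1 ^ 2 = 24 := by linarith
    have k2 : d * B2 ^ 2 = 13 := by linarith
    exact killdd d B1 B2 24 13 hd2 k1 k2 (by norm_num)
  · have e3 : T3 = -3 := by omega
    subst e3
    have e1 : T1 = 3 := by omega
    subst e1
    have e2 : T2 = 4 := by omega
    subst e2
    have k1 : d * B1 ^ 2 = 17 := by linarith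
    have k2 : d * B2 ^ 2 = 20 := by linarith
    exact killdd d B1 B2 17 20 hd2 k1 k2 (by norm_num)
  · have e3 : T3 = -5 := by omega
    subst e3
    have e1 : T1 = 2 := by omega
    subst e1
    have e2 : T2 = 7 := by omega
    subst e2
    have k1 : d * B1 ^ 2 = 12 := by linarith
    have k2 : d * B2 ^ 2 = 53 := by linarith
    exact killdd d B1 B2 12 53 hd2 k1 k2 (by norm_num)

lemma endB5 (d T1 B1 T2 B2 T3 B3 k m : ℤ)
    (hd : Squarefree d) (hd2 : 2 ≤ d)
    (hB1 : B1 ≠ 0) (hB2 : B2 ≠ 0) (hB3 : B3 ≠ 0)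
    (hn1 : T1 ^ 2 - d * B1 ^ 2 = 4 * (-2))
    (hn2 : T2 ^ 2 - d * B2 ^ 2 = 4 * (-2))
    (hn3 : T3 ^ 2 - d * B3 ^ 2 = 4 * (1))
    (hT : T1 + T2 + T3 = 4) (hB : B1 + B2 + B3 = 0)
    (hE4 : T1 * T2 * B3 + T1 * B2 * T3 + B1 * T2 * T3 + d * (B1 * B2 * B3) = 0)
    (hT3 : T3 ≤ -1)
    (hR1 : (-2) + (-2) + k = 4 - 2 * T3 + (1))
    (hR2 : T1 * T2 = m + k)
    (hmrel : 2 * m = T3 * ((-2) * (-2))) : False := by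
  have hk : k = 9 - 2 * T3 := by omega
  have hm2 : 2 * m = 4 * T3 := by linear_combination hmrel
  have hfact : (4 - T3 - (T1 - T2)) * (4 - T3 + (T1 - T2)) = 36 := by
    linear_combination 4 * hR2 + 2 * hm2 + 4 * hk + (T3 - T1 - T2 - 4) * hT
  have hwlt : T1 - T2 < 4 - T3 := by
    by_contra hcon
    push_neg at hcon
    nlinarith [hfact, mul_nonneg (show (0:ℤ) ≤ (T1 - T2) - (4 - T3) by omega) (show (0:ℤ) ≤ (T1 - T2) + (4 - T3) by omega)]
  have hwgt : -(4 - T3) < T1 - T2 := by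
    by_contra hcon
    push_neg at hcon
    nlinarith [hfact, mul_nonneg (show (0:ℤ) ≤ -(T1 - T2) - (4 - T3) by omega) (show (0:ℤ) ≤ -(T1 - T2) + (4 - T3) by omega)]
  obtain ⟨a, ha⟩ : ∃ x, x = 4 - T3 - (T1 - T2) := ⟨_, rfl⟩
  obtain ⟨b, hb⟩ : ∃ x, x = 4 - T3 + (T1 - T2) := ⟨_, rfl⟩
  have hab : a * b = 36 := by rw [ha, hb]; linear_combination hfact
  have ha1 : 1 ≤ a := by omega
  have hb1 : 1 ≤ b := by omega
  have ha2 : a ≤ 36 := by nlinarith [mul_nonneg (show (0:ℤ) ≤ a by omega) (show (0:ℤ) ≤ b - 1 by omega)]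
  interval_cases a <;> (try omega)
  · have e3 : T3 = -6 := by omega
    subst e3
    have e1 : T1 = 9 := by omega
    subst e1
    have e2 : T2 = 1 := by omega
    subst e2
    have k1 : d * B1 ^ 2 = 89 := by linarith
    have k2 : d * B2 ^ 2 = 9 := by linarith
    exact killdd d B1 B2 89 9 hd2 k1 k2 (by norm_num)
  · have e3 : T3 = -2 := by omega
    subst e3
    have k3 : d * B3 ^ 2 = 0 := by linarith
    nlinarith [mul_le_mul_of_nonneg_left (sqpos B3 hB3) (show (0:ℤ) ≤ d by omega)]
  · have e3 : T3 = -6 := by omega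
    subst e3
    have e1 : T1 = 1 := by omega
    subst e1
    have e2 : T2 = 9 := by omega
    subst e2
    have k1 : d * B1 ^ 2 = 9 := by linarith
    have k2 : d * B2 ^ 2 = 89 := by linarith
    exact killdd d B1 B2 9 89 hd2 k1 k2 (by norm_num)

lemma endB6 (d T1 B1 T2 B2 T3 B3 k m : ℤ)
    (hd : Squarefree d) (hd2 : 2 ≤ d)
    (hB1 : B1 ≠ 0) (hB2 : B2 ≠ 0) (hB3 : B3 ≠ 0)
    (hn1 : T1 ^ 2 - d * B1 ^ 2 = 4 * (-4))
    (hn2 : T2 ^ 2 - d * B2 ^ 2 = 4 * (-1))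
    (hn3 : T3 ^ 2 - d * B3 ^ 2 = 4 * (1))
    (hT : T1 + T2 + T3 = 4) (hB : B1 + B2 + B3 = 0)
    (hE4 : T1 * T2 * B3 + T1 * B2 * T3 + B1 * T2 * T3 + d * (B1 * B2 * B3) = 0)
    (hT3 : T3 ≤ -1)
    (hR1 : (-4) + (-1) + k = 4 - 2 * T3 + (1))
    (hR2 : T1 * T2 = m + k)
    (hmrel : 2 * m = T3 * ((-4) * (-1))) : False := by
  have hk : k = 10 - 2 * T3 := by omega
  have hm2 : 2 * m = 4 * T3 := by linear_combination hmrel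
  have hfact : (4 - T3 - (T1 - T2)) * (4 - T3 + (T1 - T2)) = 40 := by
    linear_combination 4 * hR2 + 2 * hm2 + 4 * hk + (T3 - T1 - T2 - 4) * hT
  have hwlt : T1 - T2 < 4 - T3 := by
    by_contra hcon
    push_neg at hcon
    nlinarith [hfact, mul_nonneg (show (0:ℤ) ≤ (T1 - T2) - (4 - T3) by omega) (show (0:ℤ) ≤ (T1 - T2) + (4 - T3) by omega)]
  have hwgt : -(4 - T3) < T1 - T2 := by
    by_contra hcon
    push_neg at hcon
    nlinarith [hfact, mul_nonneg (show (0:ℤ) ≤ -(T1 - T2) - (4 - T3) by omega) (show (0:ℤ) ≤ -(T1 - T2) + (4 - T3) by omega)]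
  obtain ⟨a, ha⟩ : ∃ x, x = 4 - T3 - (T1 - T2) := ⟨_, rfl⟩
  obtain ⟨b, hb⟩ : ∃ x, x = 4 - T3 + (T1 - T2) := ⟨_, rfl⟩
  have hab : a * b = 40 := by rw [ha, hb]; linear_combination hfact
  have ha1 : 1 ≤ a := by omega
  have hb1 : 1 ≤ b := by omega
  have ha2 : a ≤ 40 := by nlinarith [mul_nonneg (show (0:ℤ) ≤ a by omega) (show (0:ℤ) ≤ b - 1 by omega)]
  interval_cases a <;> (try omega)
  · have e3 : T3 = -7 := by omega
    subst e3
    have e1 : T1 = 10 := by omega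
    subst e1
    have e2 : T2 = 1 := by omega
    subst e2
    have k1 : d * B1 ^ 2 = 116 := by linarith
    have k2 : d * B2 ^ 2 = 5 := by linarith
    exact killdd d B1 B2 116 5 hd2 k1 k2 (by norm_num)
  · have e3 : T3 = -3 := by omega
    subst e3
    have e1 : T1 = 5 := by omega
    subst e1
    have e2 : T2 = 2 := by omega
    subst e2
    have k1 : d * B1 ^ 2 = 41 := by linarith
    have k2 : d * B2 ^ 2 = 8 := by linarith
    exact killdd d B1 B2 41 8 hd2 k1 k2 (by norm_num)
  · have e3 : T3 = -3 := by omega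
    subst e3
    have e1 : T1 = 2 := by omega
    subst e1
    have e2 : T2 = 5 := by omega
    subst e2
    have k1 : d * B1 ^ 2 = 20 := by linarith
    have k2 : d * B2 ^ 2 = 29 := by linarith
    exact killdd d B1 B2 20 29 hd2 k1 k2 (by norm_num)
  · have e3 : T3 = -7 := by omega
    subst e3
    have e1 : T1 = 1 := by omega
    subst e1
    have e2 : T2 = 10 := by omega
    subst e2
    have k1 : d * B1 ^ 2 = 17 := by linarith
    have k2 : d * B2 ^ 2 = 104 := by linarith
    exact killdd d B1 B2 17 104 hd2 k1 k2 (by norm_num)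

lemma endB (d T1 B1 N1 T2 B2 N2 T3 B3 N3 k m : ℤ)
    (hd : Squarefree d) (hd2 : 2 ≤ d)
    (hB1 : B1 ≠ 0) (hB2 : B2 ≠ 0) (hB3 : B3 ≠ 0)
    (hn1 : T1 ^ 2 - d * B1 ^ 2 = 4 * N1)
    (hn2 : T2 ^ 2 - d * B2 ^ 2 = 4 * N2)
    (hn3 : T3 ^ 2 - d * B3 ^ 2 = 4 * N3)
    (hT : T1 + T2 + T3 = 4) (hB : B1 + B2 + B3 = 0)
    (hE4 : T1 * T2 * B3 + T1 * B2 * T3 + B1 * T2 * T3 + d * (B1 * B2 * B3) = 0)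
    (hprodN : N1 * N2 * N3 = 4)
    (hN1 : N1 ≤ -1) (hN2 : N2 ≤ -1) (hN3 : 1 ≤ N3)
    (hT3 : T3 ≤ -1)
    (hR1 : N1 + N2 + k = 4 - 2 * T3 + N3)
    (hR2 : T1 * T2 = m + k)
    (hmrel : 2 * m = T3 * (N1 * N2)) : False := by
  have hq : N2 * N3 ≤ -1 := by nlinarith [mul_nonneg (show (0:ℤ) ≤ -N2 - 1 by omega) (show (0:ℤ) ≤ N3 - 1 by omega)]
  have hq1 : N1 * N3 ≤ -1 := by nlinarith [mul_nonneg (show (0:ℤ) ≤ -N1 - 1 by omega) (show (0:ℤ) ≤ N3 - 1 by omega)]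
  have hN1b : -4 ≤ N1 := by nlinarith [mul_nonneg (show (0:ℤ) ≤ -N1 by omega) (show (0:ℤ) ≤ -1 - N2 * N3 by omega)]
  have hN2b : -4 ≤ N2 := by nlinarith [mul_nonneg (show (0:ℤ) ≤ -N2 by omega) (show (0:ℤ) ≤ -1 - N1 * N3 by omega)]
  have hNcase : (N1 = -1 ∧ N2 = -1 ∧ N3 = 4) ∨ (N1 = -1 ∧ N2 = -2 ∧ N3 = 2) ∨
      (N1 = -1 ∧ N2 = -4 ∧ N3 = 1) ∨ (N1 = -2 ∧ N2 = -1 ∧ N3 = 2) ∨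
      (N1 = -2 ∧ N2 = -2 ∧ N3 = 1) ∨ (N1 = -4 ∧ N2 = -1 ∧ N3 = 1) := by
    interval_cases N1 <;> interval_cases N2 <;> omega
  rcases hNcase with ⟨rfl, rfl, rfl⟩ | ⟨rfl, rfl, rfl⟩ | ⟨rfl, rfl, rfl⟩ | ⟨rfl, rfl, rfl⟩ | ⟨rfl, rfl, rfl⟩ | ⟨rfl, rfl, rfl⟩
  · exact endB1 d T1 B1 T2 B2 T3 B3 k m hd hd2 hB1 hB2 hB3 hn1 hn2 hn3 hT hB hE4 hT3 hR1 hR2 hmrel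
  · exact endB2 d T1 B1 T2 B2 T3 B3 k m hd hd2 hB1 hB2 hB3 hn1 hn2 hn3 hT hB hE4 hT3 hR1 hR2 hmrel
  · exact endB3 d T1 B1 T2 B2 T3 B3 k m hd hd2 hB1 hB2 hB3 hn1 hn2 hn3 hT hB hE4 hT3 hR1 hR2 hmrel
  · exact endB4 d T1 B1 T2 B2 T3 B3 k m hd hd2 hB1 hB2 hB3 hn1 hn2 hn3 hT hB hE4 hT3 hR1 hR2 hmrel
  · exact endB5 d T1 B1 T2 B2 T3 B3 k m hd hd2 hB1 hB2 hB3 hn1 hn2 hn3 hT hB hE4 hT3 hR1 hR2 hmrel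
  · exact endB6 d T1 B1 T2 B2 T3 B3 k m hd hd2 hB1 hB2 hB3 hn1 hn2 hn3 hT hB hE4 hT3 hR1 hR2 hmrel

lemma amgm (a b c : ℝ) (ha : 0 < a) (hb : 0 < b) (hc : 0 < c) (hs : a+b+c = 2) (hp : a*b*c = 2) : False := by
  nlinarith [mul_nonneg hc.le (sq_nonneg (a-b)), mul_pos (add_pos ha hb) (add_pos ha hb),
    mul_nonneg (mul_nonneg (add_pos ha hb).le (add_pos ha hb).le) (add_pos ha hb).le,
    sq_nonneg (a+b), mul_pos ha hb, mul_pos (mul_pos ha hb) hc]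

lemma par2 (d a b a' b' : ℤ) (h : (4:ℤ) ∣ a^2 - d*b^2) (h' : (4:ℤ) ∣ a'^2 - d*b'^2) :
    (2:ℤ) ∣ a*a' - d*(b*b') := by
  have h2 : (2:ℤ) ∣ a^2 - d*b^2 := dvd_trans (by norm_num) h
  have h2' : (2:ℤ) ∣ a'^2 - d*b'^2 := dvd_trans (by norm_num) h'
  have c2 : ((a^2 - d*b^2 : ℤ) : ZMod 2) = 0 := (ZMod.intCast_zmod_eq_zero_iff_dvd _ 2).mpr h2
  have c2' : ((a'^2 - d*b'^2 : ℤ) : ZMod 2) = 0 := (ZMod.intCast_zmod_eq_zero_iff_dvd _ 2).mpr h2'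
  refine (ZMod.intCast_zmod_eq_zero_iff_dvd _ 2).mp ?_
  push_cast at c2 c2' ⊢
  revert c2 c2'
  generalize ((a:ZMod 2)) = x; generalize ((d:ZMod 2)) = y; generalize ((b:ZMod 2)) = z
  generalize ((a':ZMod 2)) = x'; generalize ((b':ZMod 2)) = z'
  revert x y z x' z'
  decide

lemma signs (x y z : ℝ) (hs : x+y+z = 2) (hp : x*y*z = 2) :
    (0 < x ∧ y < 0 ∧ z < 0) ∨ (0 < y ∧ x < 0 ∧ z < 0) ∨ (0 < z ∧ x < 0 ∧ y < 0) := by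
  have hx : x ≠ 0 := by intro h; rw [h] at hp; simp at hp
  have hy : y ≠ 0 := by intro h; rw [h] at hp; simp at hp
  have hz : z ≠ 0 := by intro h; rw [h] at hp; simp at hp
  rcases lt_or_gt_of_ne hx with h1 | h1 <;>
    rcases lt_or_gt_of_ne hy with h2 | h2 <;>
      rcases lt_or_gt_of_ne hz with h3 | h3
  · exfalso; linarith
  · exact Or.inr (Or.inr ⟨h3, h1, h2⟩)
  · exact Or.inr (Or.inl ⟨h2, h1, h3⟩)
  · exfalso; nlinarith [mul_neg_of_neg_of_pos h1 (mul_pos h2 h3)]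
  · exact Or.inl ⟨h1, h2, h3⟩
  · exfalso; nlinarith [mul_neg_of_neg_of_pos (mul_neg_of_pos_of_neg h1 h2) h3, mul_neg_of_pos_of_neg h1 h2]
  · exfalso; nlinarith [mul_neg_of_pos_of_neg (mul_pos h1 h2) h3, mul_pos h1 h2]
  · exact absurd hp (by intro h; exact amgm x y z h1 h2 h3 hs h)

lemma caseB (d T1 B1 N1 T2 B2 N2 T3 B3 N3 : ℤ) (ω : ℝ)
    (hd : Squarefree d) (hd2 : 2 ≤ d)
    (hB1 : B1 ≠ 0) (hB2 : B2 ≠ 0) (hB3 : B3 ≠ 0)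
    (hn1 : T1 ^ 2 - d * B1 ^ 2 = 4 * N1)
    (hn2 : T2 ^ 2 - d * B2 ^ 2 = 4 * N2)
    (hn3 : T3 ^ 2 - d * B3 ^ 2 = 4 * N3)
    (hT : T1 + T2 + T3 = 4) (hB : B1 + B2 + B3 = 0)
    (hE3 : T1 * T2 * T3 + d * (T1 * B2 * B3 + T2 * B1 * B3 + T3 * B1 * B2) = 16)
    (hE4 : T1 * T2 * B3 + T1 * B2 * T3 + B1 * T2 * T3 + d * (B1 * B2 * B3) = 0)
    (hprodN : N1 * N2 * N3 = 4)
    (hω : ω ^ 2 = (d : ℝ))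
    (hp1 : 0 < ((T1:ℝ) + B1 * ω)/2) (hq2 : ((T2:ℝ) + B2 * ω)/2 < 0) (hq3 : ((T3:ℝ) + B3 * ω)/2 < 0)
    (hp2' : 0 < ((T2:ℝ) - B2 * ω)/2) (hq1' : ((T1:ℝ) - B1 * ω)/2 < 0) (hq3' : ((T3:ℝ) - B3 * ω)/2 < 0) :
    False := by
  obtain ⟨r1, hr1⟩ : ∃ x : ℝ, x = ((T1:ℝ) + B1 * ω)/2 := ⟨_, rfl⟩
  obtain ⟨r2, hr2⟩ : ∃ x : ℝ, x = ((T2:ℝ) + B2 * ω)/2 := ⟨_, rfl⟩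
  obtain ⟨r3, hr3⟩ : ∃ x : ℝ, x = ((T3:ℝ) + B3 * ω)/2 := ⟨_, rfl⟩
  obtain ⟨s1, hs1⟩ : ∃ x : ℝ, x = ((T1:ℝ) - B1 * ω)/2 := ⟨_, rfl⟩
  obtain ⟨s2, hs2⟩ : ∃ x : ℝ, x = ((T2:ℝ) - B2 * ω)/2 := ⟨_, rfl⟩
  obtain ⟨s3, hs3⟩ : ∃ x : ℝ, x = ((T3:ℝ) - B3 * ω)/2 := ⟨_, rfl⟩
  have hn1R : (T1:ℝ) ^ 2 - d * B1 ^ 2 = 4 * N1 := by exact_mod_cast hn1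
  have hn2R : (T2:ℝ) ^ 2 - d * B2 ^ 2 = 4 * N2 := by exact_mod_cast hn2
  have hn3R : (T3:ℝ) ^ 2 - d * B3 ^ 2 = 4 * N3 := by exact_mod_cast hn3
  have hTR : (T1:ℝ) + T2 + T3 = 4 := by exact_mod_cast hT
  have hBR : (B1:ℝ) + B2 + B3 = 0 := by exact_mod_cast hB
  have hE3R : (T1:ℝ) * T2 * T3 + d * (T1 * B2 * B3 + T2 * B1 * B3 + T3 * B1 * B2) = 16 := by
    exact_mod_cast hE3
  have hE4R : (T1:ℝ) * T2 * B3 + T1 * B2 * T3 + B1 * T2 * T3 + d * (B1 * B2 * B3) = 0 := by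
    exact_mod_cast hE4
  have ht1c : (T1:ℝ) = r1 + s1 := by rw [hr1, hs1]; ring
  have ht2c : (T2:ℝ) = r2 + s2 := by rw [hr2, hs2]; ring
  have ht3c : (T3:ℝ) = r3 + s3 := by rw [hr3, hs3]; ring
  have hN1R : r1 * s1 = (N1:ℝ) := by
    rw [hr1, hs1]; linear_combination (1/4 : ℝ) * hn1R - ((B1:ℝ)^2/4) * hω
  have hN2R : r2 * s2 = (N2:ℝ) := by
    rw [hr2, hs2]; linear_combination (1/4 : ℝ) * hn2R - ((B2:ℝ)^2/4) * hω
  have hN3R : r3 * s3 = (N3:ℝ) := by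
    rw [hr3, hs3]; linear_combination (1/4 : ℝ) * hn3R - ((B3:ℝ)^2/4) * hω
  have hsum : r1 + r2 + r3 = 2 := by
    rw [hr1, hr2, hr3]; linear_combination (1/2 : ℝ) * hTR + (ω/2) * hBR
  have hsum' : s1 + s2 + s3 = 2 := by
    rw [hs1, hs2, hs3]; linear_combination (1/2 : ℝ) * hTR - (ω/2) * hBR
  have hprodr : r1 * r2 * r3 = 2 := by
    rw [hr1, hr2, hr3]
    linear_combination (1/8 : ℝ) * hE3R + (ω/8) * hE4R +
      (((T1:ℝ)*B2*B3 + T2*B1*B3 + T3*B1*B2)/8 + ((B1:ℝ)*B2*B3/8) * ω) * hω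
  have hprods : s1 * s2 * s3 = 2 := by
    rw [hs1, hs2, hs3]
    linear_combination (1/8 : ℝ) * hE3R - (ω/8) * hE4R +
      (((T1:ℝ)*B2*B3 + T2*B1*B3 + T3*B1*B2)/8 - ((B1:ℝ)*B2*B3/8) * ω) * hω
  rw [← hr1] at hp1; rw [← hr2] at hq2; rw [← hr3] at hq3
  rw [← hs2] at hp2'; rw [← hs1] at hq1'; rw [← hs3] at hq3'
  have hN1neg : N1 ≤ -1 := by
    have h0 : (N1:ℝ) < 0 := by rw [← hN1R]; exact mul_neg_of_pos_of_neg hp1 hq1'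
    have : N1 < 0 := by exact_mod_cast h0
    omega
  have hN2neg : N2 ≤ -1 := by
    have h0 : (N2:ℝ) < 0 := by rw [← hN2R]; exact mul_neg_of_neg_of_pos hq2 hp2'
    have : N2 < 0 := by exact_mod_cast h0
    omega
  have hN3pos : 1 ≤ N3 := by
    have h0 : (0:ℝ) < (N3:ℝ) := by rw [← hN3R]; exact mul_pos_of_neg_of_neg hq3 hq3'
    have : 0 < N3 := by exact_mod_cast h0
    omega
  have hT3neg : T3 ≤ -1 := by
    have h0 : (T3:ℝ) < 0 := by rw [ht3c]; linarith
    have : T3 < 0 := by exact_mod_cast h0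
    omega
  have hpar : (2:ℤ) ∣ T1*T2 - d*(B1*B2) := par2 d T1 B1 T2 B2 ⟨N1, hn1⟩ ⟨N2, hn2⟩
  obtain ⟨k, hk⟩ := hpar
  obtain ⟨m, hm⟩ : ∃ m, T1*T2 + d*(B1*B2) = 2*m := ⟨k + d*(B1*B2), by omega⟩
  have hR2 : T1 * T2 = m + k := by omega
  have hkR : (T1:ℝ)*T2 - d*(B1*B2) = 2*k := by exact_mod_cast hk
  have hmR : (T1:ℝ)*T2 + d*(B1*B2) = 2*m := by exact_mod_cast hm
  have hxk : r1 * s2 + s1 * r2 = (k:ℝ) := by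
    rw [hr1, hr2, hs1, hs2]
    linear_combination (1/2 : ℝ) * hkR - ((B1:ℝ)*B2/2) * hω
  have hxm : r1 * r2 + s1 * s2 = (m:ℝ) := by
    rw [hr1, hr2, hs1, hs2]
    linear_combination (1/2 : ℝ) * hmR + ((B1:ℝ)*B2/2) * hω
  have hR1 : N1 + N2 + k = 4 - 2*T3 + N3 := by
    have hreal : (N1:ℝ) + N2 + k = 4 - 2*(T3:ℝ) + N3 := by
      have e1 : r1 + r2 = 2 - r3 := by linarith
      have e2 : s1 + s2 = 2 - s3 := by linarith
      have e3 : (r1 + r2) * (s1 + s2) = (2 - r3) * (2 - s3) := by rw [e1, e2]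
      linear_combination e3 - hN1R - hN2R - hxk + hN3R + 2 * ht3c
    exact_mod_cast hreal
  have hmrel : 2 * m = T3 * (N1 * N2) := by
    have hreal : 2 * (m:ℝ) = (T3:ℝ) * ((N1:ℝ) * N2) := by
      linear_combination (-(s1*s2)) * hprodr + (-(r1*r2)) * hprods + (-2 : ℝ) * hxm +
        (-(r1*r2*s1*s2)) * ht3c + ((T3:ℝ)*N2) * hN1R + ((T3:ℝ)*(r1*s1)) * hN2R
    exact_mod_cast hreal
  exact endB d T1 B1 N1 T2 B2 N2 T3 B3 N3 k m hd hd2 hB1 hB2 hB3 hn1 hn2 hn3 hT hB hE4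
    hprodN hN1neg hN2neg hN3pos hT3neg hR1 hR2 hmrel

lemma posEmb (d T1 B1 N1 T2 B2 N2 T3 B3 N3 : ℤ) (ω : ℝ)
    (hd : Squarefree d) (hd2 : 2 ≤ d)
    (hB1 : B1 ≠ 0) (hB2 : B2 ≠ 0) (hB3 : B3 ≠ 0)
    (hn1 : T1 ^ 2 - d * B1 ^ 2 = 4 * N1)
    (hn2 : T2 ^ 2 - d * B2 ^ 2 = 4 * N2)
    (hn3 : T3 ^ 2 - d * B3 ^ 2 = 4 * N3)
    (hT : T1 + T2 + T3 = 4) (hB : B1 + B2 + B3 = 0)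
    (hE3 : T1 * T2 * T3 + d * (T1 * B2 * B3 + T2 * B1 * B3 + T3 * B1 * B2) = 16)
    (hE4 : T1 * T2 * B3 + T1 * B2 * T3 + B1 * T2 * T3 + d * (B1 * B2 * B3) = 0)
    (hprodN : N1 * N2 * N3 = 4)
    (hω : ω ^ 2 = (d : ℝ))
    (hp1 : 0 < ((T1:ℝ) + B1 * ω)/2) (hq2 : ((T2:ℝ) + B2 * ω)/2 < 0) (hq3 : ((T3:ℝ) + B3 * ω)/2 < 0) :
    False := by
  obtain ⟨r1, hr1⟩ : ∃ x : ℝ, x = ((T1:ℝ) + B1 * ω)/2 := ⟨_, rfl⟩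
  obtain ⟨r2, hr2⟩ : ∃ x : ℝ, x = ((T2:ℝ) + B2 * ω)/2 := ⟨_, rfl⟩
  obtain ⟨r3, hr3⟩ : ∃ x : ℝ, x = ((T3:ℝ) + B3 * ω)/2 := ⟨_, rfl⟩
  obtain ⟨s1, hs1⟩ : ∃ x : ℝ, x = ((T1:ℝ) - B1 * ω)/2 := ⟨_, rfl⟩
  obtain ⟨s2, hs2⟩ : ∃ x : ℝ, x = ((T2:ℝ) - B2 * ω)/2 := ⟨_, rfl⟩
  obtain ⟨s3, hs3⟩ : ∃ x : ℝ, x = ((T3:ℝ) - B3 * ω)/2 := ⟨_, rfl⟩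
  have hn1R : (T1:ℝ) ^ 2 - d * B1 ^ 2 = 4 * N1 := by exact_mod_cast hn1
  have hn2R : (T2:ℝ) ^ 2 - d * B2 ^ 2 = 4 * N2 := by exact_mod_cast hn2
  have hn3R : (T3:ℝ) ^ 2 - d * B3 ^ 2 = 4 * N3 := by exact_mod_cast hn3
  have hTR : (T1:ℝ) + T2 + T3 = 4 := by exact_mod_cast hT
  have hBR : (B1:ℝ) + B2 + B3 = 0 := by exact_mod_cast hB
  have hE3R : (T1:ℝ) * T2 * T3 + d * (T1 * B2 * B3 + T2 * B1 * B3 + T3 * B1 * B2) = 16 := by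
    exact_mod_cast hE3
  have hE4R : (T1:ℝ) * T2 * B3 + T1 * B2 * T3 + B1 * T2 * T3 + d * (B1 * B2 * B3) = 0 := by
    exact_mod_cast hE4
  have ht1c : (T1:ℝ) = r1 + s1 := by rw [hr1, hs1]; ring
  have ht2c : (T2:ℝ) = r2 + s2 := by rw [hr2, hs2]; ring
  have ht3c : (T3:ℝ) = r3 + s3 := by rw [hr3, hs3]; ring
  have hN1R : r1 * s1 = (N1:ℝ) := by
    rw [hr1, hs1]; linear_combination (1/4 : ℝ) * hn1R - ((B1:ℝ)^2/4) * hω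
  have hN2R : r2 * s2 = (N2:ℝ) := by
    rw [hr2, hs2]; linear_combination (1/4 : ℝ) * hn2R - ((B2:ℝ)^2/4) * hω
  have hN3R : r3 * s3 = (N3:ℝ) := by
    rw [hr3, hs3]; linear_combination (1/4 : ℝ) * hn3R - ((B3:ℝ)^2/4) * hω
  have hsum : r1 + r2 + r3 = 2 := by
    rw [hr1, hr2, hr3]; linear_combination (1/2 : ℝ) * hTR + (ω/2) * hBR
  have hsum' : s1 + s2 + s3 = 2 := by
    rw [hs1, hs2, hs3]; linear_combination (1/2 : ℝ) * hTR - (ω/2) * hBR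
  have hprodr : r1 * r2 * r3 = 2 := by
    rw [hr1, hr2, hr3]
    linear_combination (1/8 : ℝ) * hE3R + (ω/8) * hE4R +
      (((T1:ℝ)*B2*B3 + T2*B1*B3 + T3*B1*B2)/8 + ((B1:ℝ)*B2*B3/8) * ω) * hω
  have hprods : s1 * s2 * s3 = 2 := by
    rw [hs1, hs2, hs3]
    linear_combination (1/8 : ℝ) * hE3R - (ω/8) * hE4R +
      (((T1:ℝ)*B2*B3 + T2*B1*B3 + T3*B1*B2)/8 - ((B1:ℝ)*B2*B3/8) * ω) * hω
  rw [← hr1] at hp1; rw [← hr2] at hq2; rw [← hr3] at hq3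
  rcases signs s1 s2 s3 hsum' hprods with ⟨c1, c2, c3⟩ | ⟨c2, c1, c3⟩ | ⟨c3, c1, c2⟩
  · -- case A : s1 positive too
    have hr1big : 2 < r1 := by linarith
    have hs1big : 2 < s1 := by linarith
    have h23 : 0 < r2 * r3 := mul_pos_of_neg_of_neg hq2 hq3
    have h23' : 0 < s2 * s3 := mul_pos_of_neg_of_neg c2 c3
    have hlt : r2 * r3 < 1 := by nlinarith
    have hlt' : s2 * s3 < 1 := by nlinarith
    have hN2pos : 1 ≤ N2 := by
      have h0 : (0:ℝ) < (N2:ℝ) := by rw [← hN2R]; exact mul_pos_of_neg_of_neg hq2 c2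
      have : 0 < N2 := by exact_mod_cast h0
      omega
    have hN3pos : 1 ≤ N3 := by
      have h0 : (0:ℝ) < (N3:ℝ) := by rw [← hN3R]; exact mul_pos_of_neg_of_neg hq3 c3
      have : 0 < N3 := by exact_mod_cast h0
      omega
    have hNN : 1 ≤ N2 * N3 := by nlinarith
    have hNNR : (1:ℝ) ≤ (N2:ℝ) * (N3:ℝ) := by exact_mod_cast hNN
    have hNeq : (N2:ℝ) * (N3:ℝ) = (r2*r3) * (s2*s3) := by rw [← hN2R, ← hN3R]; ring
    nlinarith [mul_pos h23 (show (0:ℝ) < 1 - s2*s3 by linarith)]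
  · -- case B with s2 positive
    exact caseB d T1 B1 N1 T2 B2 N2 T3 B3 N3 ω hd hd2 hB1 hB2 hB3 hn1 hn2 hn3 hT hB hE3 hE4
      hprodN hω (by rw [← hr1]; exact hp1) (by rw [← hr2]; exact hq2) (by rw [← hr3]; exact hq3)
      (by rw [← hs2]; exact c2) (by rw [← hs1]; exact c1) (by rw [← hs3]; exact c3)
  · -- case B with s3 positive : swap indices 2 and 3
    exact caseB d T1 B1 N1 T3 B3 N3 T2 B2 N2 ω hd hd2 hB1 hB3 hB2 hn1 hn3 hn2
      (by omega) (by omega) (by linear_combination hE3) (by linear_combination hE4)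
      (by linear_combination hprodN) hω
      (by rw [← hr1]; exact hp1) (by rw [← hr3]; exact hq3) (by rw [← hr2]; exact hq2)
      (by rw [← hs3]; exact c3) (by rw [← hs1]; exact c1) (by rw [← hs2]; exact c2)

lemma keyPos (d T1 B1 N1 T2 B2 N2 T3 B3 N3 : ℤ)
    (hd : Squarefree d) (hd2 : 2 ≤ d)
    (hB1 : B1 ≠ 0) (hB2 : B2 ≠ 0) (hB3 : B3 ≠ 0)
    (hn1 : T1 ^ 2 - d * B1 ^ 2 = 4 * N1)
    (hn2 : T2 ^ 2 - d * B2 ^ 2 = 4 * N2)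
    (hn3 : T3 ^ 2 - d * B3 ^ 2 = 4 * N3)
    (hT : T1 + T2 + T3 = 4) (hB : B1 + B2 + B3 = 0)
    (hE3 : T1 * T2 * T3 + d * (T1 * B2 * B3 + T2 * B1 * B3 + T3 * B1 * B2) = 16)
    (hE4 : T1 * T2 * B3 + T1 * B2 * T3 + B1 * T2 * T3 + d * (B1 * B2 * B3) = 0)
    (hprodN : N1 * N2 * N3 = 4) : False := by
  obtain ⟨ω, hω⟩ : ∃ x : ℝ, x = Real.sqrt d := ⟨_, rfl⟩
  have hωsq : ω ^ 2 = (d : ℝ) := by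
    rw [hω]; exact Real.sq_sqrt (by exact_mod_cast (by omega : (0:ℤ) ≤ d))
  have hn1R : (T1:ℝ) ^ 2 - d * B1 ^ 2 = 4 * N1 := by exact_mod_cast hn1
  have hn2R : (T2:ℝ) ^ 2 - d * B2 ^ 2 = 4 * N2 := by exact_mod_cast hn2
  have hn3R : (T3:ℝ) ^ 2 - d * B3 ^ 2 = 4 * N3 := by exact_mod_cast hn3
  have hTR : (T1:ℝ) + T2 + T3 = 4 := by exact_mod_cast hT
  have hBR : (B1:ℝ) + B2 + B3 = 0 := by exact_mod_cast hB
  have hE3R : (T1:ℝ) * T2 * T3 + d * (T1 * B2 * B3 + T2 * B1 * B3 + T3 * B1 * B2) = 16 := by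
    exact_mod_cast hE3
  have hE4R : (T1:ℝ) * T2 * B3 + T1 * B2 * T3 + B1 * T2 * T3 + d * (B1 * B2 * B3) = 0 := by
    exact_mod_cast hE4
  have hsum : ((T1:ℝ) + B1 * ω)/2 + ((T2:ℝ) + B2 * ω)/2 + ((T3:ℝ) + B3 * ω)/2 = 2 := by
    linear_combination (1/2 : ℝ) * hTR + (ω/2) * hBR
  have hprodr : (((T1:ℝ) + B1 * ω)/2) * (((T2:ℝ) + B2 * ω)/2) * (((T3:ℝ) + B3 * ω)/2) = 2 := by
    linear_combination (1/8 : ℝ) * hE3R + (ω/8) * hE4R +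
      (((T1:ℝ)*B2*B3 + T2*B1*B3 + T3*B1*B2)/8 + ((B1:ℝ)*B2*B3/8) * ω) * hωsq
  rcases signs _ _ _ hsum hprodr with ⟨c1, c2, c3⟩ | ⟨c2, c1, c3⟩ | ⟨c3, c1, c2⟩
  · exact posEmb d T1 B1 N1 T2 B2 N2 T3 B3 N3 ω hd hd2 hB1 hB2 hB3 hn1 hn2 hn3 hT hB hE3 hE4
      hprodN hωsq c1 c2 c3
  · exact posEmb d T2 B2 N2 T1 B1 N1 T3 B3 N3 ω hd hd2 hB2 hB1 hB3 hn2 hn1 hn3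
      (by omega) (by omega) (by linear_combination hE3) (by linear_combination hE4)
      (by linear_combination hprodN) hωsq c2 c1 c3
  · exact posEmb d T3 B3 N3 T1 B1 N1 T2 B2 N2 ω hd hd2 hB3 hB1 hB2 hn3 hn1 hn2
      (by omega) (by omega) (by linear_combination hE3) (by linear_combination hE4)
      (by linear_combination hprodN) hωsq c3 c1 c2

lemma sols1 (T B N : ℤ) (hB : B ≠ 0) (hN : (N = 1 ∧ T ^ 2 + B ^ 2 = 4) ∨ (N = 2 ∧ T ^ 2 + B ^ 2 = 8) ∨ (N = 4 ∧ T ^ 2 + B ^ 2 = 16)) :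
    (N = 1 ∧ T = 0 ∧ (B = 2 ∨ B = -2)) ∨
    (N = 2 ∧ (T = 2 ∨ T = -2) ∧ (B = 2 ∨ B = -2)) ∨
    (N = 4 ∧ T = 0 ∧ (B = 4 ∨ B = -4)) := by
  have h1 : T ^ 2 ≤ 16 := by rcases hN with ⟨_, h⟩ | ⟨_, h⟩ | ⟨_, h⟩ <;> nlinarith [sq_nonneg B]
  have h2 : B ^ 2 ≤ 16 := by rcases hN with ⟨_, h⟩ | ⟨_, h⟩ | ⟨_, h⟩ <;> nlinarith [sq_nonneg T]
  have hT : -4 ≤ T ∧ T ≤ 4 := by constructor <;> nlinarith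
  have hBb : -4 ≤ B ∧ B ≤ 4 := by constructor <;> nlinarith
  obtain ⟨a1, a2⟩ := hT; obtain ⟨a3, a4⟩ := hBb
  interval_cases T <;> interval_cases B <;> omega

lemma sols3 (T B N : ℤ) (hB : B ≠ 0) (hN : (N = 1 ∧ T ^ 2 + 3 * B ^ 2 = 4) ∨ (N = 2 ∧ T ^ 2 + 3 * B ^ 2 = 8) ∨ (N = 4 ∧ T ^ 2 + 3 * B ^ 2 = 16)) :
    (N = 1 ∧ (T = 1 ∨ T = -1) ∧ (B = 1 ∨ B = -1)) ∨
    (N = 4 ∧ (T = 2 ∨ T = -2) ∧ (B = 2 ∨ B = -2)) := by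
  have h1 : T ^ 2 ≤ 16 := by rcases hN with ⟨_, h⟩ | ⟨_, h⟩ | ⟨_, h⟩ <;> nlinarith [sq_nonneg B]
  have h2 : B ^ 2 ≤ 6 := by rcases hN with ⟨_, h⟩ | ⟨_, h⟩ | ⟨_, h⟩ <;> nlinarith [sq_nonneg T]
  have hT : -4 ≤ T ∧ T ≤ 4 := by constructor <;> nlinarith
  have hBb : -2 ≤ B ∧ B ≤ 2 := by constructor <;> nlinarith
  obtain ⟨a1, a2⟩ := hT; obtain ⟨a3, a4⟩ := hBb
  interval_cases T <;> interval_cases B <;> omega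

lemma negCase (d T1 B1 N1 T2 B2 N2 T3 B3 N3 : ℤ)
    (hd : Squarefree d) (hdneg : d < 0)
    (hB1 : B1 ≠ 0) (hB2 : B2 ≠ 0) (hB3 : B3 ≠ 0)
    (hn1 : T1 ^ 2 - d * B1 ^ 2 = 4 * N1)
    (hn2 : T2 ^ 2 - d * B2 ^ 2 = 4 * N2)
    (hn3 : T3 ^ 2 - d * B3 ^ 2 = 4 * N3)
    (hT : T1 + T2 + T3 = 4) (hB : B1 + B2 + B3 = 0)
    (hE4 : T1 * T2 * B3 + T1 * B2 * T3 + B1 * T2 * T3 + d * (B1 * B2 * B3) = 0)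
    (hN2p : 1 ≤ N2) (hN3p : 1 ≤ N3) (hN1 : N1 = 1)
    (hprodN : N1 * N2 * N3 = 4) : False := by
  subst hN1
  have hb1 := sqpos B1 hB1
  have hb2 := sqpos B2 hB2
  have hb3 := sqpos B3 hB3
  have hd4 : -4 ≤ d := by
    nlinarith [mul_nonneg (show (0:ℤ) ≤ -d by omega) (show (0:ℤ) ≤ B1 ^ 2 - 1 by omega), sq_nonneg T1]
  have hdne4 : d ≠ -4 := by
    intro h
    have h2 := hd 2 (by rw [h]; norm_num)
    rw [Int.isUnit_iff] at h2
    omega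
  have hN23 : N2 * N3 = 4 := by linarith [hprodN]
  have hN2u : N2 ≤ 4 := by
    nlinarith [mul_nonneg (show (0:ℤ) ≤ N2 by omega) (show (0:ℤ) ≤ N3 - 1 by omega)]
  have hNcase : (N2 = 1 ∧ N3 = 4) ∨ (N2 = 2 ∧ N3 = 2) ∨ (N2 = 4 ∧ N3 = 1) := by
    interval_cases N2 <;> omega
  have hd123 : d = -1 ∨ d = -2 ∨ d = -3 := by omega
  rcases hd123 with rfl | rfl | rfl
  · -- d = -1
    have h1 := sols1 T1 B1 1 hB1 (by omega)
    have h2 := sols1 T2 B2 N2 hB2 (by rcases hNcase with ⟨h, h'⟩ | ⟨h, h'⟩ | ⟨h, h'⟩ <;> subst h <;> omega)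
    have h3 := sols1 T3 B3 N3 hB3 (by rcases hNcase with ⟨h, h'⟩ | ⟨h, h'⟩ | ⟨h, h'⟩ <;> subst h' <;> omega)
    omega
  · -- d = -2 : no solution with N1 = 1
    have : T1 ^ 2 + 2 * B1 ^ 2 = 4 := by omega
    have hT1 : T1 ^ 2 ≤ 4 := by nlinarith
    have hBB1 : B1 ^ 2 ≤ 2 := by nlinarith [sq_nonneg T1]
    have hT1b : -2 ≤ T1 ∧ T1 ≤ 2 := by constructor <;> nlinarith
    have hB1b : -1 ≤ B1 ∧ B1 ≤ 1 := by constructor <;> nlinarith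
    obtain ⟨a1, a2⟩ := hT1b; obtain ⟨a3, a4⟩ := hB1b
    interval_cases T1 <;> interval_cases B1 <;> omega
  · -- d = -3
    have h1 := sols3 T1 B1 1 hB1 (by omega)
    have h2 := sols3 T2 B2 N2 hB2 (by rcases hNcase with ⟨h, h'⟩ | ⟨h, h'⟩ | ⟨h, h'⟩ <;> subst h <;> omega)
    have h3 := sols3 T3 B3 N3 hB3 (by rcases hNcase with ⟨h, h'⟩ | ⟨h, h'⟩ | ⟨h, h'⟩ <;> subst h' <;> omega)
    -- now all values pinned up to signs; E4 needed
    rcases h1 with ⟨_, hT1v, hB1v⟩ | ⟨hN1v, _, _⟩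
    · rcases h2 with ⟨hN2v, hT2v, hB2v⟩ | ⟨hN2v, hT2v, hB2v⟩ <;>
        rcases h3 with ⟨hN3v, hT3v, hB3v⟩ | ⟨hN3v, hT3v, hB3v⟩ <;>
          rcases hT1v with rfl | rfl <;> rcases hB1v with rfl | rfl <;>
            rcases hT2v with rfl | rfl <;> rcases hB2v with rfl | rfl <;>
              rcases hT3v with rfl | rfl <;> rcases hB3v with rfl | rfl <;> omega
    · omega

lemma key (d : ℤ) (hd : Squarefree d) (hd0 : d ≠ 0) (hd1 : d ≠ 1)
    (T1 B1 N1 T2 B2 N2 T3 B3 N3 : ℤ)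
    (hB1 : B1 ≠ 0) (hB2 : B2 ≠ 0) (hB3 : B3 ≠ 0)
    (hn1 : T1 ^ 2 - d * B1 ^ 2 = 4 * N1)
    (hn2 : T2 ^ 2 - d * B2 ^ 2 = 4 * N2)
    (hn3 : T3 ^ 2 - d * B3 ^ 2 = 4 * N3)
    (hT : T1 + T2 + T3 = 4) (hB : B1 + B2 + B3 = 0)
    (hE3 : T1 * T2 * T3 + d * (T1 * B2 * B3 + T2 * B1 * B3 + T3 * B1 * B2) = 16)
    (hE4 : T1 * T2 * B3 + T1 * B2 * T3 + B1 * T2 * T3 + d * (B1 * B2 * B3) = 0) : False := by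
  have idt : (4*N1) * (4*N2) * (4*N3) =
      (T1 * T2 * T3 + d * (T1 * B2 * B3 + T2 * B1 * B3 + T3 * B1 * B2)) ^ 2
      - d * (T1 * T2 * B3 + T1 * B2 * T3 + B1 * T2 * T3 + d * (B1 * B2 * B3)) ^ 2 := by
    rw [← hn1, ← hn2, ← hn3]; ring
  rw [hE3, hE4] at idt
  have hprodN : N1 * N2 * N3 = 4 := by linarith [idt]
  rcases lt_or_gt_of_ne hd0 with hdneg | hdpos
  · -- d < 0 : norms positive
    have hb1 := sqpos B1 hB1
    have hb2 := sqpos B2 hB2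
    have hb3 := sqpos B3 hB3
    have hda : (0:ℤ) ≤ -d - 1 := by omega
    have hN1p : 1 ≤ N1 := by nlinarith [mul_nonneg (show (0:ℤ) ≤ -d by omega) (show (0:ℤ) ≤ B1^2 - 1 by omega), sq_nonneg T1]
    have hN2p : 1 ≤ N2 := by nlinarith [mul_nonneg (show (0:ℤ) ≤ -d by omega) (show (0:ℤ) ≤ B2^2 - 1 by omega), sq_nonneg T2]
    have hN3p : 1 ≤ N3 := by nlinarith [mul_nonneg (show (0:ℤ) ≤ -d by omega) (show (0:ℤ) ≤ B3^2 - 1 by omega), sq_nonneg T3]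
    have hone : N1 = 1 ∨ N2 = 1 ∨ N3 = 1 := by
      by_contra hcon
      push_neg at hcon
      obtain ⟨h1, h2, h3⟩ := hcon
      have e1 : 2 ≤ N1 := by omega
      have e2 : 2 ≤ N2 := by omega
      have e3 : 2 ≤ N3 := by omega
      nlinarith [mul_le_mul e1 e2 (by omega) (by omega : (0:ℤ) ≤ N1),
        mul_le_mul (show 4 ≤ N1*N2 by nlinarith [mul_le_mul e1 e2 (by omega) (by omega : (0:ℤ) ≤ N1)]) e3 (by omega) (by positivity)]
    rcases hone with h | h | h
    · exact negCase d T1 B1 N1 T2 B2 N2 T3 B3 N3 hd hdneg hB1 hB2 hB3 hn1 hn2 hn3 hT hB hE4 hN2p hN3p h hprodN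
    · exact negCase d T2 B2 N2 T1 B1 N1 T3 B3 N3 hd hdneg hB2 hB1 hB3 hn2 hn1 hn3
        (by omega) (by omega) (by linear_combination hE4) hN1p hN3p h (by linear_combination hprodN)
    · exact negCase d T3 B3 N3 T1 B1 N1 T2 B2 N2 hd hdneg hB3 hB1 hB2 hn3 hn1 hn2
        (by omega) (by omega) (by linear_combination hE4) hN1p hN2p h (by linear_combination hprodN)
  · have hd2 : 2 ≤ d := by omega
    exact keyPos d T1 B1 N1 T2 B2 N2 T3 B3 N3 hd hd2 hB1 hB2 hB3 hn1 hn2 hn3 hT hB hE3 hE4 hprodN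

/-- For a squarefree integer `d ≠ 0, 1` with `α` a square root of `d` in `ℂ`,
if `r, s, t` lie in the ring of integers of `K = ℚ(√d) = ℚ⟮α⟯` and satisfy
`r + s + t = 2` and `r * s * t = 2`, then at least one of `r, s, t` is rational. -/
theorem stmt_1 (d : ℤ) (hd : Squarefree d) (hd0 : d ≠ 0) (hd1 : d ≠ 1)
    (α : ℂ) (hα : α ^ 2 = (d : ℂ))
    (r s t : ℂ) (hr : r ∈ ℚ⟮α⟯) (hs : s ∈ ℚ⟮α⟯) (ht : t ∈ ℚ⟮α⟯)
    (hri : IsIntegral ℤ r) (hsi : IsIntegral ℤ s) (hti : IsIntegral ℤ t)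
    (hsum : r + s + t = 2) (hprod : r * s * t = 2) :
    (∃ q : ℚ, r = (q : ℂ)) ∨ (∃ q : ℚ, s = (q : ℂ)) ∨ (∃ q : ℚ, t = (q : ℂ)) := by
  obtain ⟨a1, b1, rfl⟩ := coords d α hα r hr
  obtain ⟨a2, b2, rfl⟩ := coords d α hα s hs
  obtain ⟨a3, b3, rfl⟩ := coords d α hα t ht
  by_cases hb1 : b1 = 0
  · exact Or.inl ⟨a1, by rw [hb1]; push_cast; ring⟩
  by_cases hb2 : b2 = 0
  · exact Or.inr (Or.inl ⟨a2, by rw [hb2]; push_cast; ring⟩)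
  by_cases hb3 : b3 = 0
  · exact Or.inr (Or.inr ⟨a3, by rw [hb3]; push_cast; ring⟩)
  exfalso
  obtain ⟨T1, B1, N1, hB1, hT1, hBb1, hn1⟩ := int_coords d hd hd0 hd1 α hα a1 b1 hb1 hri
  obtain ⟨T2, B2, N2, hB2, hT2, hBb2, hn2⟩ := int_coords d hd hd0 hd1 α hα a2 b2 hb2 hsi
  obtain ⟨T3, B3, N3, hB3, hT3, hBb3, hn3⟩ := int_coords d hd hd0 hd1 α hα a3 b3 hb3 hti
  -- sum components
  have hsum' : ((a1 + a2 + a3 - 2 : ℚ) : ℂ) + ((b1 + b2 + b3 : ℚ) : ℂ) * α = 0 := by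
    push_cast
    linear_combination hsum
  obtain ⟨hsa, hsb⟩ := lin_indep d hd hd1 α hα _ _ hsum'
  have hTsum : T1 + T2 + T3 = 4 := by
    have : ((T1 + T2 + T3 : ℤ) : ℚ) = ((4 : ℤ) : ℚ) := by push_cast [hT1, hT2, hT3]; linarith
    exact_mod_cast this
  have hBsum : B1 + B2 + B3 = 0 := by
    have : ((B1 + B2 + B3 : ℤ) : ℚ) = ((0 : ℤ) : ℚ) := by push_cast [hBb1, hBb2, hBb3]; linarith
    exact_mod_cast this
  -- product components
  have hprod' : ((a1 * a2 * a3 + d * (a1 * b2 * b3 + a2 * b1 * b3 + a3 * b1 * b2) - 2 : ℚ) : ℂ)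
      + ((a1 * a2 * b3 + a1 * b2 * a3 + b1 * a2 * a3 + d * (b1 * b2 * b3) : ℚ) : ℂ) * α = 0 := by
    push_cast
    linear_combination hprod - ((b1 : ℂ) * b2 * b3 * α + (a1 : ℂ) * b2 * b3 + (b1 : ℂ) * a2 * b3 + (b1 : ℂ) * b2 * a3) * hα
  obtain ⟨hpa, hpb⟩ := lin_indep d hd hd1 α hα _ _ hprod'
  have hE3 : T1 * T2 * T3 + d * (T1 * B2 * B3 + T2 * B1 * B3 + T3 * B1 * B2) = 16 := by
    have : ((T1 * T2 * T3 + d * (T1 * B2 * B3 + T2 * B1 * B3 + T3 * B1 * B2) : ℤ) : ℚ) = ((16 : ℤ) : ℚ) := by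
      push_cast [hT1, hT2, hT3, hBb1, hBb2, hBb3]
      linear_combination 8 * hpa
    exact_mod_cast this
  have hE4 : T1 * T2 * B3 + T1 * B2 * T3 + B1 * T2 * T3 + d * (B1 * B2 * B3) = 0 := by
    have : ((T1 * T2 * B3 + T1 * B2 * T3 + B1 * T2 * T3 + d * (B1 * B2 * B3) : ℤ) : ℚ) = ((0 : ℤ) : ℚ) := by
      push_cast [hT1, hT2, hT3, hBb1, hBb2, hBb3]
      linear_combination 8 * hpb
    exact_mod_cast this
  exact key d hd hd0 hd1 T1 B1 N1 T2 B2 N2 T3 B3 N3 hB1 hB2 hB3 hn1 hn2 hn3 hTsum hBsum hE3 hE4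
end

section
/- Let K be a field of characteristic zero and let r, s, t ∈ K satisfy r + s + t = 2, r·s·t = 2 and r ≠ 0. Then the pair X = (3r - 18)/r, Y = (27r + 54s - 54)/r satisfies the Weierstrass equation Y² = X³ + 135·X + 297. -/
/-- If `r + s + t = r * s * t = 2` in a field of characteristic zero with `r ≠ 0`, then
`X = (3r - 18)/r`, `Y = (27r + 54s - 54)/r` satisfy the Weierstrass equation
`Y² = X³ + 135X + 297`. -/
theorem stmt_3 (K : Type*) [Field K] [CharZero K] (r s t : K)
    (hsum : r + s + t = 2) (hprod : r * s * t = 2) (hr : r ≠ 0) :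
    ((27 * r + 54 * s - 54) / r) ^ 2 =
      ((3 * r - 18) / r) ^ 3 + 135 * ((3 * r - 18) / r) + 297 := by
  have ht : t = 2 - r - s := by linear_combination hsum
  subst ht
  field_simp
  linear_combination (-2916) * hprod
end

section
/- Let K be a field of characteristic zero and let X, Y ∈ K satisfy Y² = X³ + 135·X + 297 with X ≠ 3. Set r = 18/(3 - X), s = (Y - 3X - 18)/(3(3 - X)) and t = 2 - r - s. Then r + s + t = 2 and r·s·t = 2. -/
/-- If `Y² = X³ + 135X + 297` in a field of characteristic zero with `X ≠ 3`, then
`r = 18/(3 - X)`, `s = (Y - 3X - 18)/(3(3 - X))`, `t = 2 - r - s` satisfy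
`r + s + t = 2` and `r * s * t = 2`. -/
theorem stmt_4 (K : Type*) [Field K] [CharZero K] (X Y : K)
    (hW : Y ^ 2 = X ^ 3 + 135 * X + 297) (hX : X ≠ 3) :
    18 / (3 - X) + (Y - 3 * X - 18) / (3 * (3 - X)) +
        (2 - 18 / (3 - X) - (Y - 3 * X - 18) / (3 * (3 - X))) = 2 ∧
      18 / (3 - X) * ((Y - 3 * X - 18) / (3 * (3 - X))) *
        (2 - 18 / (3 - X) - (Y - 3 * X - 18) / (3 * (3 - X))) = 2 := by
  have h3 : (3 : K) - X ≠ 0 := sub_ne_zero.mpr (Ne.symm hX)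
  constructor
  · ring
  · field_simp
    ring_nf
    ring_nf at hW
    linear_combination (-18 : K) * hW
end

section
/- Let K be a field of characteristic zero and let r, s, t ∈ K satisfy r + s + t = 3, r·s·t = 3 and r ≠ 0. Then the pair X = (27r - 108)/r, Y = (324r + 648s - 972)/r satisfies the Weierstrass equation Y² = X³ + 3645·X - 13122. -/
/-- If `r + s + t = r * s * t = 3` in a field of characteristic zero with `r ≠ 0`, then
`X = (27r - 108)/r`, `Y = (324r + 648s - 972)/r` satisfy the Weierstrass equation
`Y² = X³ + 3645X - 13122`. -/
theorem stmt_14 (K : Type*) [Field K] [CharZero K] (r s t : K)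
    (hsum : r + s + t = 3) (hprod : r * s * t = 3) (hr : r ≠ 0) :
    ((324 * r + 648 * s - 972) / r) ^ 2 =
      ((27 * r - 108) / r) ^ 3 + 3645 * ((27 * r - 108) / r) - 13122 := by
  have ht : t = 3 - r - s := by linear_combination hsum
  subst ht
  field_simp
  linear_combination (-419904 : K) * hprod
end

section
/- Let d be a squarefree integer with d ≠ 0, 1, let K = ℚ(√d) and let O_K be its ring of integers. If the system of equations r + s + t = 3 and r·s·t = 3 has a solution (r, s, t) ∈ O_K³, then d ∈ {-2, -1, 7, 10, 13}. -/
open Polynomial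

open IntermediateField

lemma aux15_rat_int {q : ℚ} {k : ℤ} (h : q * q = (k : ℚ)) : ∃ z : ℤ, (z : ℚ) = q := by
  have hden : q.den * q.den = 1 := by
    have := Rat.mul_self_den q
    rw [h] at this
    simpa [Rat.den_intCast] using this.symm
  have h1 : q.den = 1 := (Nat.eq_one_of_mul_eq_one_right (by nlinarith [hden]) : q.den = 1)
  exact ⟨q.num, Rat.coe_int_num_of_den_eq_one h1⟩

lemma aux15_sf_not_sq {d : ℤ} (hd : Squarefree d) (hd1 : d ≠ 1) (q : ℚ) :
    q * q ≠ (d : ℚ) := by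
  intro h
  obtain ⟨z, hz⟩ := aux15_rat_int h
  rw [← hz] at h
  have hzz : z * z = d := by exact_mod_cast h
  have : IsUnit z := hd z ⟨1, by rw [← hzz]; ring⟩
  rcases Int.isUnit_iff.mp this with rfl | rfl
  · exact hd1 (by omega)
  · exact hd1 (by omega)

lemma aux15_uniq {d : ℤ} (hd : Squarefree d) (hd1 : d ≠ 1) {α : ℂ}
    (hα : α ^ 2 = (d : ℂ)) (x y : ℚ) (h : (x : ℂ) + y * α = 0) : x = 0 ∧ y = 0 := by
  by_cases hy : y = 0
  · subst hy
    simp only [Rat.cast_zero, zero_mul, add_zero, Rat.cast_eq_zero] at h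
    exact ⟨h, rfl⟩
  · exfalso
    have hyC : (y : ℂ) ≠ 0 := by exact_mod_cast hy
    have hαq : α = ((-x / y : ℚ) : ℂ) := by
      push_cast
      field_simp
      linear_combination h
    apply aux15_sf_not_sq hd hd1 (-x / y)
    have : (((-x / y) * (-x / y) : ℚ) : ℂ) = ((d : ℚ) : ℂ) := by
      push_cast [← hαq]
      linear_combination hα
    exact_mod_cast this

example : True := trivial

open IntermediateField in
lemma aux15_mem_coords {d : ℤ} {α : ℂ} (hα : α ^ 2 = (d : ℂ)) {r : ℂ}
    (hr : r ∈ ℚ⟮α⟯) : ∃ x y : ℚ, r = x + y * α := by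
  have hint : IsIntegral ℚ α := by
    refine ⟨X ^ 2 - C (d : ℚ), monic_X_pow_sub_C _ (by norm_num), ?_⟩
    simp only [eval₂_sub, eval₂_pow, eval₂_X, eval₂_C, hα, eq_ratCast,
      Rat.cast_intCast, sub_self]
  have hmem : r ∈ Algebra.adjoin ℚ {α} := by
    have h2 : r ∈ (ℚ⟮α⟯).toSubalgebra := hr
    rw [IntermediateField.adjoin_simple_toSubalgebra_of_isAlgebraic hint.isAlgebraic] at h2
    exact h2
  clear hr
  induction hmem using Algebra.adjoin_induction with
  | mem z hz =>
      rcases hz with rfl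
      exact ⟨0, 1, by simp⟩
  | algebraMap q => exact ⟨q, 0, by simp⟩
  | add a b _ _ iha ihb =>
      obtain ⟨x1, y1, rfl⟩ := iha
      obtain ⟨x2, y2, rfl⟩ := ihb
      exact ⟨x1 + x2, y1 + y2, by push_cast; ring⟩
  | mul a b _ _ iha ihb =>
      obtain ⟨x1, y1, rfl⟩ := iha
      obtain ⟨x2, y2, rfl⟩ := ihb
      refine ⟨x1 * x2 + d * y1 * y2, x1 * y2 + y1 * x2, by push_cast; linear_combination (y1 : ℂ) * y2 * hα⟩

lemma aux15_int_coords {d : ℤ} (hd : Squarefree d) (hd1 : d ≠ 1) {α : ℂ}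
    (hα : α ^ 2 = (d : ℂ)) {r : ℂ} (hri : IsIntegral ℤ r) {x y : ℚ}
    (hr : r = x + y * α) :
    ∃ A B n : ℤ, (A : ℚ) = 2 * x ∧ (B : ℚ) = 2 * y ∧ A ^ 2 - d * B ^ 2 = 4 * n := by
  by_cases hy : y = 0
  · subst hy
    have hx : IsIntegral ℤ (algebraMap ℚ ℂ x) := by
      rw [eq_ratCast (algebraMap ℚ ℂ) x]
      rwa [hr, Rat.cast_zero, zero_mul, add_zero] at hri
    have hx2 : IsIntegral ℤ x := (isIntegral_algebraMap_iff (algebraMap ℚ ℂ).injective).mp hx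
    obtain ⟨z, hz⟩ := IsIntegrallyClosed.isIntegral_iff.mp hx2
    have hz' : (z : ℚ) = x := by rw [← hz, eq_intCast (algebraMap ℤ ℚ)]
    refine ⟨2 * z, 0, z ^ 2, ?_, by norm_num, by ring⟩
    push_cast
    rw [hz']
  · -- y ≠ 0 : minimal polynomial is the explicit quadratic
    set p : ℚ[X] := X ^ 2 + (C (-(2 * x)) * X + C (x ^ 2 - d * y ^ 2)) with hp
    have hmonic : p.Monic := by
      apply Polynomial.monic_X_pow_add
      exact lt_of_le_of_lt (Polynomial.degree_linear_le) (by norm_num)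
    have hdeg : p.natDegree = 2 := by rw [hp]; compute_degree!
    have hroot : Polynomial.aeval r p = 0 := by
      rw [hp, hr]
      simp only [map_add, map_pow, map_mul, aeval_X, aeval_C, eq_ratCast]
      push_cast
      linear_combination (y : ℂ) ^ 2 * hα
    have hri' : IsIntegral ℚ r := hri.tower_top
    have hdvd := minpoly.dvd ℚ r hroot
    have hne1 : (minpoly ℚ r).natDegree ≠ 1 := by
      intro h1
      obtain ⟨c, hc⟩ := minpoly.natDegree_eq_one_iff.mp h1
      rw [eq_ratCast (algebraMap ℚ ℂ) c] at hc
      have h0 : ((x - c : ℚ) : ℂ) + (y : ℚ) * α = 0 := by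
        push_cast
        rw [hc, hr]
        ring
      exact hy (aux15_uniq hd hd1 hα _ _ h0).2
    obtain ⟨q, hq⟩ := hdvd
    have hqm : q.Monic := (minpoly.monic hri').of_mul_monic_left (hq ▸ hmonic)
    have hdeg2 : (minpoly ℚ r).natDegree + q.natDegree = 2 := by
      rw [← Polynomial.natDegree_mul (minpoly.ne_zero hri') hqm.ne_zero, ← hq, hdeg]
    have hq1 : q = 1 := by
      have hpos := minpoly.natDegree_pos hri'
      exact Polynomial.eq_one_of_monic_natDegree_zero hqm (by omega)
    have hpeq : minpoly ℚ r = p := by rw [hq, hq1, mul_one]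
    have hmap : minpoly ℚ r = (minpoly ℤ r).map (algebraMap ℤ ℚ) :=
      minpoly.isIntegrallyClosed_eq_field_fractions' ℚ hri
    set z1 : ℤ := (minpoly ℤ r).coeff 1 with hz1
    set z0 : ℤ := (minpoly ℤ r).coeff 0 with hz0
    have hcoe := hmap.symm.trans hpeq
    have hc1 : (z1 : ℚ) = -(2 * x) := by
      have h := congrArg (fun f => Polynomial.coeff f 1) hcoe
      simp only [Polynomial.coeff_map, eq_intCast (algebraMap ℤ ℚ)] at h
      rw [← hz1] at h
      rw [h, hp]
      simp only [Polynomial.coeff_add, Polynomial.coeff_X_pow, Polynomial.coeff_C_mul,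
        Polynomial.coeff_X_one, Polynomial.coeff_C]
      norm_num
    have hc0 : (z0 : ℚ) = x ^ 2 - d * y ^ 2 := by
      have h := congrArg (fun f => Polynomial.coeff f 0) hcoe
      simp only [Polynomial.coeff_map, eq_intCast (algebraMap ℤ ℚ)] at h
      rw [← hz0] at h
      rw [h, hp]
      simp only [Polynomial.coeff_add, Polynomial.coeff_X_pow, Polynomial.coeff_C_mul,
        Polynomial.coeff_X_zero, Polynomial.coeff_C]
      norm_num
    -- now extract B
    have hMq : (d : ℚ) * (2 * y) ^ 2 = ((z1 ^ 2 - 4 * z0 : ℤ) : ℚ) := by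
      push_cast
      rw [hc1, hc0]
      ring
    have hsq : ((d : ℚ) * (2 * y)) * ((d : ℚ) * (2 * y)) = ((d * (z1 ^ 2 - 4 * z0) : ℤ) : ℚ) := by
      push_cast
      push_cast at hMq
      linear_combination (d : ℚ) * hMq
    obtain ⟨w, hw⟩ := aux15_rat_int hsq
    have hww : w * w = d * (z1 ^ 2 - 4 * z0) := by
      rw [← hw] at hsq
      exact_mod_cast hsq
    have hdw : d ∣ w := by
      refine (hd.dvd_pow_iff_dvd (n := 2) two_ne_zero).mp ?_
      rw [sq]
      exact ⟨z1 ^ 2 - 4 * z0, hww⟩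
    obtain ⟨B, hB⟩ := hdw
    have hd0' : (d : ℚ) ≠ 0 := by exact_mod_cast hd.ne_zero
    have hBq : (B : ℚ) = 2 * y := by
      apply mul_left_cancel₀ hd0'
      rw [← hw, hB]
      push_cast
      ring
    refine ⟨-z1, B, z0, by push_cast; rw [hc1]; ring, hBq, ?_⟩
    have hfin : ((-z1 : ℤ) : ℚ) ^ 2 - (d : ℚ) * (B : ℚ) ^ 2 = 4 * (z0 : ℚ) := by
      push_cast
      rw [hc1, hBq, hc0]
      ring
    exact_mod_cast hfin

lemma aux15_dBsq {d B v : ℤ} (hB : B ≠ 0) (h : d * B ^ 2 = v) (hv : v ≠ 0)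
    (h40l : -40 ≤ v) (h40r : v ≤ 40) :
    d * 1 = v ∨ d * 4 = v ∨ d * 9 = v ∨ d * 16 = v ∨ d * 25 = v ∨ d * 36 = v := by
  have hdvd : B ^ 2 ∣ |v| := (dvd_abs _ _).mpr ⟨d, by linear_combination -h⟩
  have h1 : B ^ 2 ≤ 40 := le_trans (Int.le_of_dvd (abs_pos.mpr hv) hdvd) (abs_le.mpr ⟨h40l, h40r⟩)
  have hb1 : -6 ≤ B := by nlinarith
  have hb2 : B ≤ 6 := by nlinarith
  interval_cases B <;> norm_num at h ⊢ <;> omega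

lemma aux15_uniqZ {d : ℤ} (hd : Squarefree d) (hd1 : d ≠ 1) {α : ℂ}
    (hα : α ^ 2 = (d : ℂ)) (a b : ℤ) (h : (a : ℂ) + (b : ℂ) * α = 0) : a = 0 ∧ b = 0 := by
  have h' : ((a : ℚ) : ℂ) + ((b : ℚ) : ℂ) * α = 0 := by push_cast; exact_mod_cast h
  obtain ⟨h1, h2⟩ := aux15_uniq hd hd1 hα _ _ h'
  exact ⟨by exact_mod_cast h1, by exact_mod_cast h2⟩

set_option maxHeartbeats 2000000 in
lemma aux15_P2 {d : ℤ} (hd : Squarefree d) (hd1 : d ≠ 1) {α : ℂ} (hα : α ^ 2 = (d : ℂ))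
    (A₁ B₁ A₂ B₂ A₃ B₃ n₁ n : ℤ)
    (hn1 : A₁ ^ 2 - d * B₁ ^ 2 = 4 * n₁) (hn2 : A₂ ^ 2 - d * B₂ ^ 2 = 4 * n)
    (hn3 : A₃ ^ 2 - d * B₃ ^ 2 = 4 * n)
    (hB1 : B₁ ≠ 0) (hprod9 : n₁ * (n * n) = 9)
    (h1 : A₁ + A₂ + A₃ = 6) (h2 : B₁ + B₂ + B₃ = 0)
    (h3 : A₁ * A₂ * A₃ + d * (A₁ * B₂ * B₃ + A₂ * B₃ * B₁ + A₃ * B₁ * B₂) = 24)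
    (h4 : A₂ * A₃ * B₁ + A₃ * A₁ * B₂ + A₁ * A₂ * B₃ + d * (B₁ * B₂ * B₃) = 0) : False := by
  have hd0 : d ≠ 0 := hd.ne_zero
  -- complex coordinates
  set r1 : ℂ := ((A₁ : ℂ) + (B₁ : ℂ) * α) / 2 with hr1
  set r2 : ℂ := ((A₂ : ℂ) + (B₂ : ℂ) * α) / 2 with hr2
  set r3 : ℂ := ((A₃ : ℂ) + (B₃ : ℂ) * α) / 2 with hr3
  set s1 : ℂ := ((A₁ : ℂ) - (B₁ : ℂ) * α) / 2 with hs1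
  set s2 : ℂ := ((A₂ : ℂ) - (B₂ : ℂ) * α) / 2 with hs2
  set s3 : ℂ := ((A₃ : ℂ) - (B₃ : ℂ) * α) / 2 with hs3
  have h1C : ((A₁ : ℂ) + A₂ + A₃) = 6 := by exact_mod_cast h1
  have h2C : ((B₁ : ℂ) + B₂ + B₃) = 0 := by exact_mod_cast h2
  have h3C : ((A₁ : ℂ) * A₂ * A₃ + (d : ℂ) * (A₁ * B₂ * B₃ + A₂ * B₃ * B₁ + A₃ * B₁ * B₂)) = 24 := by
    exact_mod_cast h3
  have h4C : ((A₂ : ℂ) * A₃ * B₁ + A₃ * A₁ * B₂ + A₁ * A₂ * B₃ + (d : ℂ) * (B₁ * B₂ * B₃)) = 0 := by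
    exact_mod_cast h4
  have hn1C : ((A₁ : ℂ) ^ 2 - (d : ℂ) * (B₁ : ℂ) ^ 2) = 4 * (n₁ : ℂ) := by exact_mod_cast hn1
  have hn2C : ((A₂ : ℂ) ^ 2 - (d : ℂ) * (B₂ : ℂ) ^ 2) = 4 * (n : ℂ) := by exact_mod_cast hn2
  have hn3C : ((A₃ : ℂ) ^ 2 - (d : ℂ) * (B₃ : ℂ) ^ 2) = 4 * (n : ℂ) := by exact_mod_cast hn3
  have hsumC : r1 + r2 + r3 = 3 := by
    rw [hr1, hr2, hr3]; linear_combination h1C / 2 + (α / 2) * h2C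
  have hconjC : s1 + s2 + s3 = 3 := by
    rw [hs1, hs2, hs3]; linear_combination h1C / 2 - (α / 2) * h2C
  have hprodC : r1 * r2 * r3 = 3 := by
    rw [hr1, hr2, hr3]
    linear_combination h3C / 8 + (α / 8) * h4C +
      (((A₁ : ℂ) * B₂ * B₃ + A₂ * B₃ * B₁ + A₃ * B₁ * B₂) / 8 + (B₁ : ℂ) * B₂ * B₃ / 8 * α) * hα
  have hnorm1 : r1 * s1 = (n₁ : ℂ) := by
    rw [hr1, hs1]; linear_combination hn1C / 4 - ((B₁ : ℂ) ^ 2 / 4) * hα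
  have hnorm2 : r2 * s2 = (n : ℂ) := by
    rw [hr2, hs2]; linear_combination hn2C / 4 - ((B₂ : ℂ) ^ 2 / 4) * hα
  have hnorm3 : r3 * s3 = (n : ℂ) := by
    rw [hr3, hs3]; linear_combination hn3C / 4 - ((B₃ : ℂ) ^ 2 / 4) * hα
  have G1 : (n₁ : ℂ) * (r2 * r3) + (n : ℂ) * (r1 * r3) + (n : ℂ) * (r1 * r2) = 9 := by
    linear_combination (-(r2 * r3)) * hnorm1 - (r1 * r3) * hnorm2 - (r1 * r2) * hnorm3 +
      (r1 * r2 * r3) * hconjC + 3 * hprodC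
  have G3 : (n : ℂ) * r1 ^ 3 - 3 * (n : ℂ) * r1 ^ 2 + 9 * r1 - 3 * (n₁ : ℂ) = 0 := by
    linear_combination (-r1) * G1 + (n₁ : ℂ) * hprodC + ((n : ℂ) * r1 ^ 2) * hsumC
  -- extract coordinates
  have hext : ((n * (A₁ ^ 3 + 3 * A₁ * d * B₁ ^ 2) - 6 * n * (A₁ ^ 2 + d * B₁ ^ 2) + 36 * A₁ -
      24 * n₁ : ℤ) : ℂ) +
      ((n * (3 * A₁ ^ 2 * B₁ + d * B₁ ^ 3) - 12 * n * A₁ * B₁ + 36 * B₁ : ℤ) : ℂ) * α = 0 := by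
    push_cast
    rw [hr1] at G3
    linear_combination 8 * G3 -
      ((n : ℂ) * (3 * A₁ * B₁ ^ 2) - 6 * (n : ℂ) * B₁ ^ 2 + (n : ℂ) * B₁ ^ 3 * α) * hα
  obtain ⟨hX, hY⟩ := aux15_uniqZ hd hd1 hα _ _ hext
  -- integer endgame
  clear hext G3 G1 hnorm1 hnorm2 hnorm3 hprodC hsumC hconjC hn1C hn2C hn3C h1C h2C h3C h4C
  clear hr1 hr2 hr3 hs1 hs2 hs3
  clear r1 r2 r3 s1 s2 s3
  clear hα
  clear α
  have h5 : B₁ * (4 * (n * A₁ ^ 2 - 3 * n * A₁ - n * n₁ + 9)) = 0 := by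
    linear_combination hY + (n * B₁) * hn1
  have hi : n * A₁ ^ 2 - 3 * n * A₁ - n * n₁ + 9 = 0 := by
    rcases mul_eq_zero.mp h5 with h | h
    · exact absurd h hB1
    · omega
  have hXX : 4 * n * A₁ ^ 3 - 12 * n * A₁ * n₁ - 12 * n * A₁ ^ 2 + 24 * n * n₁ + 36 * A₁ -
      24 * n₁ = 0 := by
    linear_combination hX + (3 * n * A₁ - 6 * n) * hn1
  have h8 : 8 * (n₁ * (n * A₁ - 3 * n + 3)) = 0 := by
    linear_combination 4 * A₁ * hi - hXX
  have hn₁0 : n₁ ≠ 0 := by rintro rfl; simp at hprod9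
  have hT : n * A₁ - 3 * n + 3 = 0 := by
    have h9 : n₁ * (n * A₁ - 3 * n + 3) = 0 := by linarith
    rcases mul_eq_zero.mp h9 with h | h
    · exact absurd h hn₁0
    · exact h
  have hdvd3 : n ∣ 3 := ⟨3 - A₁, by linear_combination hT⟩
  have hb1 : n ≤ 3 := Int.le_of_dvd (by norm_num) hdvd3
  have hb2 : -3 ≤ n := by
    have := Int.le_of_dvd (show (0:ℤ) < 3 by norm_num) ((neg_dvd).mpr hdvd3)
    omega
  -- case on n
  interval_cases n
  -- n = -3
  · have hA : A₁ = 4 := by omega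
    subst hA
    have hn₁ : n₁ = 1 := by linarith [hi]
    subst hn₁
    have hdB : d * B₁ ^ 2 = 12 := by linarith [hn1]
    rcases aux15_dBsq hB1 hdB (by norm_num) (by norm_num) (by norm_num) with h|h|h|h|h|h
    · -- d = 12, not squarefree
      rcases Int.isUnit_iff.mp (hd 2 ⟨3, by omega⟩) with h' | h' <;> omega
    · -- d = 3
      have hd3 : d = 3 := by omega
      subst hd3
      have hB12 : B₁ ^ 2 = 4 := by nlinarith [hdB]
      have hA23 : A₂ + A₃ = 2 := by omega
      have hB23 : B₂ + B₃ = -B₁ := by omega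
      have hA3 : A₃ = 2 - A₂ := by omega
      have hB3 : B₃ = -B₁ - B₂ := by omega
      rw [hA3, hB3] at hn3
      have hB1v : B₁ = 2 ∨ B₁ = -2 := by
        have : -2 ≤ B₁ ∧ B₁ ≤ 2 := by constructor <;> nlinarith
        rcases this with ⟨hl, hr⟩
        interval_cases B₁ <;> omega
      rcases hB1v with rfl | rfl
      · have e3 : 4 * A₂ + 12 * B₂ + 8 = 0 := by linear_combination hn2 - hn3
        have hA2 : A₂ = -2 - 3 * B₂ := by omega
        rw [hA2] at hn2
        nlinarith [sq_nonneg (B₂ + 1), hn2]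
      · have e3 : 4 * A₂ - 12 * B₂ + 8 = 0 := by linear_combination hn2 - hn3
        have hA2 : A₂ = -2 + 3 * B₂ := by omega
        rw [hA2] at hn2
        nlinarith [sq_nonneg (B₂ - 1), hn2]
    · omega
    · omega
    · omega
    · omega
  -- n = -2
  · omega
  -- n = -1
  · have hA : A₁ = 6 := by omega
    subst hA
    have hn₁ : n₁ = 9 := by linarith [hi]
    have hdB : d * B₁ ^ 2 = 0 := by linarith [hn1]
    rcases mul_eq_zero.mp hdB with h | h
    · exact hd0 h
    · exact hB1 (by nlinarith [h])
  -- n = 0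
  · omega
  -- n = 1
  · have hA : A₁ = 0 := by omega
    subst hA
    have hn₁ : n₁ = 9 := by linarith [hi]
    subst hn₁
    have hdB : d * B₁ ^ 2 = -36 := by linarith [hn1]
    rcases aux15_dBsq hB1 hdB (by norm_num) (by norm_num) (by norm_num) with h|h|h|h|h|h
    · -- d = -36
      rcases Int.isUnit_iff.mp (hd 2 ⟨-9, by omega⟩) with h' | h' <;> omega
    · -- d = -9
      rcases Int.isUnit_iff.mp (hd 3 ⟨-1, by omega⟩) with h' | h' <;> omega
    · -- d = -4
      rcases Int.isUnit_iff.mp (hd 2 ⟨-1, by omega⟩) with h' | h' <;> omega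
    · omega
    · omega
    · -- d = -1
      have hdv : d = -1 := by omega
      subst hdv
      have hB2b : B₂ ^ 2 ≤ 4 := by linarith [sq_nonneg A₂]
      have hB3b : B₃ ^ 2 ≤ 4 := by linarith [sq_nonneg A₃]
      have hB1v : B₁ ^ 2 = 36 := by linarith
      have h2a : -2 ≤ B₂ ∧ B₂ ≤ 2 :=
        ⟨by nlinarith [sq_nonneg (B₂ + 2)], by nlinarith [sq_nonneg (B₂ - 2)]⟩
      have h3a : -2 ≤ B₃ ∧ B₃ ≤ 2 :=
        ⟨by nlinarith [sq_nonneg (B₃ + 2)], by nlinarith [sq_nonneg (B₃ - 2)]⟩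
      have h1a : B₁ = 6 ∨ B₁ = -6 := by
        have hz : (B₁ - 6) * (B₁ + 6) = 0 := by linear_combination hB1v
        rcases mul_eq_zero.mp hz with h' | h'
        · left; omega
        · right; omega
      omega
  -- n = 2
  · omega
  -- n = 3
  · have hA : A₁ = 2 := by omega
    subst hA
    have hn₁ : n₁ = 1 := by linarith [hi]
    have hdB : d * B₁ ^ 2 = 0 := by linarith [hn1]
    rcases mul_eq_zero.mp hdB with h | h
    · exact hd0 h
    · exact hB1 (by nlinarith [h])

set_option maxHeartbeats 2000000 in
lemma aux15_P3a {d : ℤ} (hd : Squarefree d) (hd1 : d ≠ 1) {α : ℂ} (hα : α ^ 2 = (d : ℂ))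
    (A₁ B₁ A₂ B₂ A₃ B₃ : ℤ)
    (hn1 : A₁ ^ 2 - d * B₁ ^ 2 = 4) (hn3 : A₃ ^ 2 - d * B₃ ^ 2 = -36)
    (h1 : A₁ + A₂ + A₃ = 6) (h2 : B₁ + B₂ + B₃ = 0)
    (h3 : A₁ * A₂ * A₃ + d * (A₁ * B₂ * B₃ + A₂ * B₃ * B₁ + A₃ * B₁ * B₂) = 24)
    (h4 : A₂ * A₃ * B₁ + A₃ * A₁ * B₂ + A₁ * A₂ * B₃ + d * (B₁ * B₂ * B₃) = 0) : False := by
  set r1 : ℂ := ((A₁ : ℂ) + (B₁ : ℂ) * α) / 2 with hr1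
  set r2 : ℂ := ((A₂ : ℂ) + (B₂ : ℂ) * α) / 2 with hr2
  set r3 : ℂ := ((A₃ : ℂ) + (B₃ : ℂ) * α) / 2 with hr3
  set s1 : ℂ := ((A₁ : ℂ) - (B₁ : ℂ) * α) / 2 with hs1
  set s2 : ℂ := ((A₂ : ℂ) - (B₂ : ℂ) * α) / 2 with hs2
  set s3 : ℂ := ((A₃ : ℂ) - (B₃ : ℂ) * α) / 2 with hs3
  have h1C : ((A₁ : ℂ) + A₂ + A₃) = 6 := by exact_mod_cast h1
  have h2C : ((B₁ : ℂ) + B₂ + B₃) = 0 := by exact_mod_cast h2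
  have h3C : ((A₁ : ℂ) * A₂ * A₃ + (d : ℂ) * (A₁ * B₂ * B₃ + A₂ * B₃ * B₁ + A₃ * B₁ * B₂)) = 24 := by
    exact_mod_cast h3
  have h4C : ((A₂ : ℂ) * A₃ * B₁ + A₃ * A₁ * B₂ + A₁ * A₂ * B₃ + (d : ℂ) * (B₁ * B₂ * B₃)) = 0 := by
    exact_mod_cast h4
  have hn1C : ((A₁ : ℂ) ^ 2 - (d : ℂ) * (B₁ : ℂ) ^ 2) = 4 := by exact_mod_cast hn1
  have hn3C : ((A₃ : ℂ) ^ 2 - (d : ℂ) * (B₃ : ℂ) ^ 2) = -36 := by exact_mod_cast hn3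
  have hsumC : r1 + r2 + r3 = 3 := by
    rw [hr1, hr2, hr3]; linear_combination h1C / 2 + (α / 2) * h2C
  have hconjC : s1 + s2 + s3 = 3 := by
    rw [hs1, hs2, hs3]; linear_combination h1C / 2 - (α / 2) * h2C
  have hprodC : r1 * r2 * r3 = 3 := by
    rw [hr1, hr2, hr3]
    linear_combination h3C / 8 + (α / 8) * h4C +
      (((A₁ : ℂ) * B₂ * B₃ + A₂ * B₃ * B₁ + A₃ * B₁ * B₂) / 8 + (B₁ : ℂ) * B₂ * B₃ / 8 * α) * hα
  have hprodbC : s1 * s2 * s3 = 3 := by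
    rw [hs1, hs2, hs3]
    linear_combination h3C / 8 - (α / 8) * h4C +
      (((A₁ : ℂ) * B₂ * B₃ + A₂ * B₃ * B₁ + A₃ * B₁ * B₂) / 8 - (B₁ : ℂ) * B₂ * B₃ / 8 * α) * hα
  have hnorm1 : r1 * s1 = 1 := by
    rw [hr1, hs1]; linear_combination hn1C / 4 - ((B₁ : ℂ) ^ 2 / 4) * hα
  have hnorm3 : r3 * s3 = -9 := by
    rw [hr3, hs3]; linear_combination hn3C / 4 - ((B₃ : ℂ) ^ 2 / 4) * hα
  have S1 : s3 = -3 * (r1 * r2) := by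
    linear_combination (-(1 : ℂ) / 3) * s3 * hprodC + (1 / 3) * r1 * r2 * hnorm3
  have hext1 : ((2 * A₃ + 3 * (A₁ * A₂ + d * B₁ * B₂) : ℤ) : ℂ) +
      ((-2 * B₃ + 3 * (A₁ * B₂ + A₂ * B₁) : ℤ) : ℂ) * α = 0 := by
    rw [hs3, hr1, hr2] at S1
    push_cast
    linear_combination 4 * S1 - 3 * (B₁ : ℂ) * B₂ * hα
  obtain ⟨e1, e2⟩ := aux15_uniqZ hd hd1 hα _ _ hext1
  have h3A : (3 : ℤ) ∣ 2 * A₃ := ⟨-(A₁ * A₂ + d * B₁ * B₂), by linarith⟩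
  have h3B : (3 : ℤ) ∣ 2 * B₃ := ⟨A₁ * B₂ + A₂ * B₁, by linarith⟩
  obtain ⟨a, ha⟩ : (3 : ℤ) ∣ A₃ := by omega
  obtain ⟨b, hb⟩ : (3 : ℤ) ∣ B₃ := by omega
  rw [ha, hb] at hn3
  have hε : a ^ 2 - d * b ^ 2 = -4 := by nlinarith [hn3]
  have hεC : ((a : ℂ) ^ 2 - (d : ℂ) * (b : ℂ) ^ 2) = -4 := by exact_mod_cast hε
  set ε : ℂ := ((a : ℂ) + (b : ℂ) * α) / 2 with hεdef
  set εb : ℂ := ((a : ℂ) - (b : ℂ) * α) / 2 with hεbdef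
  have hnormε : ε * εb = -1 := by
    rw [hεdef, hεbdef]; linear_combination hεC / 4 - ((b : ℂ) ^ 2 / 4) * hα
  have hr3ε : r3 = 3 * ε := by
    rw [hr3, hεdef]
    have haC : (A₃ : ℂ) = 3 * a := by exact_mod_cast ha
    have hbC : (B₃ : ℂ) = 3 * b := by exact_mod_cast hb
    rw [haC, hbC]; ring
  have hs3ε : s3 = 3 * εb := by
    rw [hs3, hεbdef]
    have haC : (A₃ : ℂ) = 3 * a := by exact_mod_cast ha
    have hbC : (B₃ : ℂ) = 3 * b := by exact_mod_cast hb
    rw [haC, hbC]; ring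
  have S2 : r1 * r2 * ε = 1 := by
    rw [hr3ε] at hprodC; linear_combination hprodC / 3
  have S2b : s1 * s2 * εb = 1 := by
    rw [hs3ε] at hprodbC; linear_combination hprodbC / 3
  have S3 : r2 = -(s1 * εb) := by
    linear_combination (-(s1 * εb)) * S2 + (r2 * ε * εb) * hnorm1 + r2 * hnormε
  have S3b : s2 = -(r1 * ε) := by
    linear_combination (-(r1 * ε)) * S2b + (s2 * ε * εb) * hnorm1 + s2 * hnormε
  have E : r1 - s1 * εb + 3 * ε = 3 := by linear_combination hsumC - S3 - hr3ε
  have Eb : s1 - r1 * ε + 3 * εb = 3 := by linear_combination hconjC - S3b - hs3ε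
  have S5 : 2 * r1 = 3 + 3 * εb - 3 * ε - 3 * εb ^ 2 := by
    linear_combination E + εb * Eb + r1 * hnormε
  have hext2 : ((2 * A₁ + 3 * a ^ 2 : ℤ) : ℂ) + ((2 * B₁ - 3 * a * b + 6 * b : ℤ) : ℂ) * α = 0 := by
    rw [hr1, hεdef, hεbdef] at S5
    push_cast
    linear_combination 2 * S5 - (3 / 2 : ℂ) * (b : ℂ) ^ 2 * hα + (3 / 2 : ℂ) * hεC
  obtain ⟨e3, e4⟩ := aux15_uniqZ hd hd1 hα _ _ hext2
  have h36 : 36 * (a ^ 3 - 2 * a ^ 2 + 4 * a - 4) = 16 := by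
    linear_combination 4 * hn1 + (3 * a ^ 2 - 2 * A₁) * e3 + d * (2 * B₁ + 3 * a * b - 6 * b) * e4 -
      9 * (a - 2) ^ 2 * hε
  have : (36 : ℤ) ∣ 16 := ⟨a ^ 3 - 2 * a ^ 2 + 4 * a - 4, h36.symm⟩
  norm_num at this

set_option maxHeartbeats 2000000 in
lemma aux15_P3b {d : ℤ} (hd : Squarefree d) (hd1 : d ≠ 1) {α : ℂ} (hα : α ^ 2 = (d : ℂ))
    (A₁ B₁ A₂ B₂ A₃ B₃ : ℤ)
    (hn1 : A₁ ^ 2 - d * B₁ ^ 2 = -4) (hn2 : A₂ ^ 2 - d * B₂ ^ 2 = 12)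
    (hn3 : A₃ ^ 2 - d * B₃ ^ 2 = -12)
    (h1 : A₁ + A₂ + A₃ = 6) (h2 : B₁ + B₂ + B₃ = 0)
    (h3 : A₁ * A₂ * A₃ + d * (A₁ * B₂ * B₃ + A₂ * B₃ * B₁ + A₃ * B₁ * B₂) = 24)
    (h4 : A₂ * A₃ * B₁ + A₃ * A₁ * B₂ + A₁ * A₂ * B₃ + d * (B₁ * B₂ * B₃) = 0) : False := by
  set r1 : ℂ := ((A₁ : ℂ) + (B₁ : ℂ) * α) / 2 with hr1
  set r2 : ℂ := ((A₂ : ℂ) + (B₂ : ℂ) * α) / 2 with hr2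
  set r3 : ℂ := ((A₃ : ℂ) + (B₃ : ℂ) * α) / 2 with hr3
  set s1 : ℂ := ((A₁ : ℂ) - (B₁ : ℂ) * α) / 2 with hs1
  set s2 : ℂ := ((A₂ : ℂ) - (B₂ : ℂ) * α) / 2 with hs2
  set s3 : ℂ := ((A₃ : ℂ) - (B₃ : ℂ) * α) / 2 with hs3
  have h1C : ((A₁ : ℂ) + A₂ + A₃) = 6 := by exact_mod_cast h1
  have h2C : ((B₁ : ℂ) + B₂ + B₃) = 0 := by exact_mod_cast h2
  have h3C : ((A₁ : ℂ) * A₂ * A₃ + (d : ℂ) * (A₁ * B₂ * B₃ + A₂ * B₃ * B₁ + A₃ * B₁ * B₂)) = 24 := by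
    exact_mod_cast h3
  have h4C : ((A₂ : ℂ) * A₃ * B₁ + A₃ * A₁ * B₂ + A₁ * A₂ * B₃ + (d : ℂ) * (B₁ * B₂ * B₃)) = 0 := by
    exact_mod_cast h4
  have hn1C : ((A₁ : ℂ) ^ 2 - (d : ℂ) * (B₁ : ℂ) ^ 2) = -4 := by exact_mod_cast hn1
  have hn2C : ((A₂ : ℂ) ^ 2 - (d : ℂ) * (B₂ : ℂ) ^ 2) = 12 := by exact_mod_cast hn2
  have hn3C : ((A₃ : ℂ) ^ 2 - (d : ℂ) * (B₃ : ℂ) ^ 2) = -12 := by exact_mod_cast hn3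
  have hsumC : r1 + r2 + r3 = 3 := by
    rw [hr1, hr2, hr3]; linear_combination h1C / 2 + (α / 2) * h2C
  have hconjC : s1 + s2 + s3 = 3 := by
    rw [hs1, hs2, hs3]; linear_combination h1C / 2 - (α / 2) * h2C
  have hprodC : r1 * r2 * r3 = 3 := by
    rw [hr1, hr2, hr3]
    linear_combination h3C / 8 + (α / 8) * h4C +
      (((A₁ : ℂ) * B₂ * B₃ + A₂ * B₃ * B₁ + A₃ * B₁ * B₂) / 8 + (B₁ : ℂ) * B₂ * B₃ / 8 * α) * hα
  have hnorm1 : r1 * s1 = -1 := by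
    rw [hr1, hs1]; linear_combination hn1C / 4 - ((B₁ : ℂ) ^ 2 / 4) * hα
  have hnorm2 : r2 * s2 = 3 := by
    rw [hr2, hs2]; linear_combination hn2C / 4 - ((B₂ : ℂ) ^ 2 / 4) * hα
  have hnorm3 : r3 * s3 = -3 := by
    rw [hr3, hs3]; linear_combination hn3C / 4 - ((B₃ : ℂ) ^ 2 / 4) * hα
  have T1 : -(r2 * r3) + 3 * (r1 * r3) - 3 * (r1 * r2) = 9 := by
    linear_combination (r1 * r2 * r3) * hconjC + 3 * hprodC - (r2 * r3) * hnorm1 -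
      (r1 * r3) * hnorm2 - (r1 * r2) * hnorm3
  have T2 : -(r2 * r3) = 3 * s1 := by
    linear_combination s1 * hprodC - (r2 * r3) * hnorm1
  have T3 : s1 + r1 * r3 - r1 * r2 = 3 := by
    linear_combination T1 / 3 - T2 / 3
  have T4 : r3 - r2 = s1 ^ 2 - 3 * s1 := by
    linear_combination (-s1) * T3 + (r3 - r2) * hnorm1
  have T5 : 2 * r3 = 3 - r1 + s1 ^ 2 - 3 * s1 := by
    linear_combination T4 + hsumC
  have hext : ((2 * A₃ - A₁ ^ 2 + 4 * A₁ - 8 : ℤ) : ℂ) +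
      ((2 * B₃ - 2 * B₁ + A₁ * B₁ : ℤ) : ℂ) * α = 0 := by
    rw [hr3, hr1, hs1] at T5
    push_cast
    linear_combination 2 * T5 + ((B₁ : ℂ) ^ 2 / 2) * hα - (1 / 2 : ℂ) * hn1C
  obtain ⟨e5, e6⟩ := aux15_uniqZ hd hd1 hα _ _ hext
  have h96 : -4 * A₁ ^ 3 + 24 * A₁ ^ 2 - 48 * A₁ + 96 = 0 := by
    linear_combination 4 * hn3 - (2 * A₃ + A₁ ^ 2 - 4 * A₁ + 8) * e5 +
      d * (2 * B₃ + 2 * B₁ - A₁ * B₁) * e6 - (2 - A₁) ^ 2 * hn1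
  have h24 : A₁ * (A₁ ^ 2 - 6 * A₁ + 12) = 24 := by linarith [h96]
  have hQ : 0 < A₁ ^ 2 - 6 * A₁ + 12 := by nlinarith [sq_nonneg (A₁ - 3)]
  have hApos : 0 < A₁ := by nlinarith [h24, hQ]
  have hdvd : A₁ ∣ 24 := ⟨A₁ ^ 2 - 6 * A₁ + 12, h24.symm⟩
  have hle : A₁ ≤ 24 := Int.le_of_dvd (by norm_num) hdvd
  have h24' : A₁ * A₁ * A₁ - 6 * (A₁ * A₁) + 12 * A₁ - 24 = 0 := by linarith [h96]
  clear hext T5 T4 T3 T2 T1 hnorm1 hnorm2 hnorm3 hprodC hsumC hconjC hn1C hn2C hn3C h1C h2C h3C h4C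
  clear hr1 hr2 hr3 hs1 hs2 hs3
  clear r1 r2 r3 s1 s2 s3
  clear hα
  clear α
  interval_cases A₁ <;> omega

set_option maxHeartbeats 1000000 in
lemma aux15_caseR {d : ℤ} (hd : Squarefree d) (hd0 : d ≠ 0)
    (A₁ B₁ A₂ B₂ A₃ n₁ n₂ n₃ : ℤ)
    (hn1 : A₁ ^ 2 - d * B₁ ^ 2 = 4 * n₁) (hn2 : A₂ ^ 2 - d * B₂ ^ 2 = 4 * n₂)
    (hn3 : A₃ ^ 2 = 4 * n₃)
    (h1 : A₁ + A₂ + A₃ = 6) (h2 : B₁ + B₂ = 0)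
    (h3 : A₁ * A₂ * A₃ + d * (A₃ * B₁ * B₂) = 24)
    (h4 : A₂ * A₃ * B₁ + A₃ * A₁ * B₂ = 0) :
    d = -2 ∨ d = -1 ∨ d = 7 ∨ d = 10 := by
  have hB2 : B₂ = -B₁ := by omega
  subst hB2
  obtain ⟨c, hc⟩ : ∃ c, A₃ = 2 * c := by
    rcases Int.even_or_odd A₃ with ⟨k, hk⟩ | ⟨k, hk⟩
    · exact ⟨k, by omega⟩
    · exfalso
      rw [hk] at hn3
      have : 4 * (k * k + k - n₃) = -1 := by linear_combination hn3
      omega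
  subst hc
  have hc0 : c ≠ 0 := by
    rintro rfl
    norm_num at h3
  have h4' : (2 * c * B₁) * (A₂ - A₁) = 0 := by linear_combination h4
  rcases mul_eq_zero.mp h4' with h5 | h5
  · -- B₁ = 0 : all three rational
    have hB1 : B₁ = 0 := by
      rcases mul_eq_zero.mp h5 with h6 | h6
      · omega
      · exact h6
    subst hB1
    exfalso
    obtain ⟨a1, ha1⟩ : ∃ a, A₁ = 2 * a := by
      rcases Int.even_or_odd A₁ with ⟨k, hk⟩ | ⟨k, hk⟩
      · exact ⟨k, by omega⟩
      · exfalso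
        rw [hk] at hn1
        have : 4 * (k * k + k - n₁) = -1 := by linear_combination hn1
        omega
    obtain ⟨a2, ha2⟩ : ∃ a, A₂ = 2 * a := by
      rcases Int.even_or_odd A₂ with ⟨k, hk⟩ | ⟨k, hk⟩
      · exact ⟨k, by omega⟩
      · exfalso
        rw [hk] at hn2
        have : 4 * (k * k + k - n₂) = -1 := by linear_combination hn2
        omega
    subst ha1
    subst ha2
    have hp : a1 * (a2 * c) = 3 := by linarith [h3]
    have hs : a1 + a2 + c = 3 := by omega
    have hd1' : a1 ∣ 3 := ⟨a2 * c, hp.symm⟩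
    have hd2' : a2 ∣ 3 := ⟨a1 * c, by linarith [hp]⟩
    have hb1 : a1 ≤ 3 := Int.le_of_dvd (by norm_num) hd1'
    have hb1' : -3 ≤ a1 := by
      have := Int.le_of_dvd (show (0:ℤ) < 3 by norm_num) ((neg_dvd).mpr hd1')
      omega
    have hb2 : a2 ≤ 3 := Int.le_of_dvd (by norm_num) hd2'
    have hb2' : -3 ≤ a2 := by
      have := Int.le_of_dvd (show (0:ℤ) < 3 by norm_num) ((neg_dvd).mpr hd2')
      omega
    have hp' : a1 * a2 * c = 3 := by linarith [hp]
    interval_cases a1 <;> interval_cases a2 <;> omega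
  · -- A₂ = A₁
    have h5' : A₂ = A₁ := by omega
    subst h5'
    have hcn8 : 8 * (c * n₁) = 24 := by linear_combination h3 - 2 * c * hn1
    have hcn : c * n₁ = 3 := by linarith
    have hA1 : A₂ = 3 - c := by omega
    subst hA1
    have hcd : c ∣ 3 := ⟨n₁, hcn.symm⟩
    have hcb : c ≤ 3 := Int.le_of_dvd (by norm_num) hcd
    have hcb' : -3 ≤ c := by
      have := Int.le_of_dvd (show (0:ℤ) < 3 by norm_num) ((neg_dvd).mpr hcd)
      omega
    interval_cases c
    · -- c = -3, n₁ = -1, A = 6, d B₁² = 40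
      have hn₁ : n₁ = -1 := by omega
      have hdB : d * B₁ ^ 2 = 40 := by rw [hn₁] at hn1; linarith [hn1]
      have hB10 : B₁ ≠ 0 := by rintro rfl; norm_num at hdB
      rcases aux15_dBsq hB10 hdB (by norm_num) (by norm_num) (by norm_num) with h|h|h|h|h|h
      · rcases Int.isUnit_iff.mp (hd 2 ⟨10, by omega⟩) with h' | h' <;> omega
      · right; right; right; omega
      · omega
      · omega
      · omega
      · omega
    · omega
    · -- c = -1, n₁ = -3, A = 4, d B₁² = 28
      have hn₁ : n₁ = -3 := by omega
      have hdB : d * B₁ ^ 2 = 28 := by rw [hn₁] at hn1; linarith [hn1]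
      have hB10 : B₁ ≠ 0 := by rintro rfl; norm_num at hdB
      rcases aux15_dBsq hB10 hdB (by norm_num) (by norm_num) (by norm_num) with h|h|h|h|h|h
      · rcases Int.isUnit_iff.mp (hd 2 ⟨7, by omega⟩) with h' | h' <;> omega
      · right; right; left; omega
      · omega
      · omega
      · omega
      · omega
    · omega
    · -- c = 1, n₁ = 3, A = 2, d B₁² = -8
      have hn₁ : n₁ = 3 := by omega
      have hdB : d * B₁ ^ 2 = -8 := by rw [hn₁] at hn1; linarith [hn1]
      have hB10 : B₁ ≠ 0 := by rintro rfl; norm_num at hdB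
      rcases aux15_dBsq hB10 hdB (by norm_num) (by norm_num) (by norm_num) with h|h|h|h|h|h
      · rcases Int.isUnit_iff.mp (hd 2 ⟨-2, by omega⟩) with h' | h' <;> omega
      · left; omega
      · omega
      · omega
      · omega
      · omega
    · omega
    · -- c = 3, n₁ = 1, A = 0, d B₁² = -4
      have hn₁ : n₁ = 1 := by omega
      have hdB : d * B₁ ^ 2 = -4 := by rw [hn₁] at hn1; linarith [hn1]
      have hB10 : B₁ ≠ 0 := by rintro rfl; norm_num at hdB
      rcases aux15_dBsq hB10 hdB (by norm_num) (by norm_num) (by norm_num) with h|h|h|h|h|h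
      · rcases Int.isUnit_iff.mp (hd 2 ⟨-1, by omega⟩) with h' | h' <;> omega
      · right; left; omega
      · omega
      · omega
      · omega
      · omega

set_option maxHeartbeats 4000000 in
/-- For a squarefree integer `d ≠ 0, 1` with `α` a square root of `d` in `ℂ`, if the
system `r + s + t = r * s * t = 3` has a solution in the ring of integers of
`K = ℚ(√d) = ℚ⟮α⟯`, then `d ∈ {-2, -1, 7, 10, 13}`. -/
theorem stmt_15 (d : ℤ) (hd : Squarefree d) (hd0 : d ≠ 0) (hd1 : d ≠ 1)
    (α : ℂ) (hα : α ^ 2 = (d : ℂ))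
    (r s t : ℂ) (hr : r ∈ ℚ⟮α⟯) (hs : s ∈ ℚ⟮α⟯) (ht : t ∈ ℚ⟮α⟯)
    (hri : IsIntegral ℤ r) (hsi : IsIntegral ℤ s) (hti : IsIntegral ℤ t)
    (hsum : r + s + t = 3) (hprod : r * s * t = 3) :
    d = -2 ∨ d = -1 ∨ d = 7 ∨ d = 10 ∨ d = 13 := by
  obtain ⟨x1, y1, hrxy⟩ := aux15_mem_coords hα hr
  obtain ⟨x2, y2, hsxy⟩ := aux15_mem_coords hα hs
  obtain ⟨x3, y3, htxy⟩ := aux15_mem_coords hα ht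
  obtain ⟨A₁, B₁, n₁, hA1, hB1, hn₁⟩ := aux15_int_coords hd hd1 hα hri hrxy
  obtain ⟨A₂, B₂, n₂, hA2, hB2, hn₂⟩ := aux15_int_coords hd hd1 hα hsi hsxy
  obtain ⟨A₃, B₃, n₃, hA3, hB3, hn₃⟩ := aux15_int_coords hd hd1 hα hti htxy
  have hrC : r = ((A₁ : ℂ) + (B₁ : ℂ) * α) / 2 := by
    have e1 : (A₁ : ℂ) = 2 * (x1 : ℂ) := by exact_mod_cast hA1
    have e2 : (B₁ : ℂ) = 2 * (y1 : ℂ) := by exact_mod_cast hB1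
    rw [hrxy, e1, e2]; ring
  have hsC : s = ((A₂ : ℂ) + (B₂ : ℂ) * α) / 2 := by
    have e1 : (A₂ : ℂ) = 2 * (x2 : ℂ) := by exact_mod_cast hA2
    have e2 : (B₂ : ℂ) = 2 * (y2 : ℂ) := by exact_mod_cast hB2
    rw [hsxy, e1, e2]; ring
  have htC : t = ((A₃ : ℂ) + (B₃ : ℂ) * α) / 2 := by
    have e1 : (A₃ : ℂ) = 2 * (x3 : ℂ) := by exact_mod_cast hA3
    have e2 : (B₃ : ℂ) = 2 * (y3 : ℂ) := by exact_mod_cast hB3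
    rw [htxy, e1, e2]; ring
  rw [hrC, hsC, htC] at hsum hprod
  have hextS : (((A₁ + A₂ + A₃) - 6 : ℤ) : ℂ) + ((B₁ + B₂ + B₃ : ℤ) : ℂ) * α = 0 := by
    push_cast
    linear_combination 2 * hsum
  obtain ⟨h1', h2'⟩ := aux15_uniqZ hd hd1 hα _ _ hextS
  have h1 : A₁ + A₂ + A₃ = 6 := by omega
  have h2 : B₁ + B₂ + B₃ = 0 := h2'
  have hextP : ((A₁ * A₂ * A₃ + d * (A₁ * B₂ * B₃ + A₂ * B₃ * B₁ + A₃ * B₁ * B₂) - 24 : ℤ) : ℂ) +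
      ((A₂ * A₃ * B₁ + A₃ * A₁ * B₂ + A₁ * A₂ * B₃ + d * (B₁ * B₂ * B₃) : ℤ) : ℂ) * α = 0 := by
    push_cast
    linear_combination 8 * hprod -
      (((A₁ : ℂ) * B₂ * B₃ + (A₂ : ℂ) * B₃ * B₁ + (A₃ : ℂ) * B₁ * B₂) + (B₁ : ℂ) * B₂ * B₃ * α) * hα
  obtain ⟨h3', h4'⟩ := aux15_uniqZ hd hd1 hα _ _ hextP
  have h3 : A₁ * A₂ * A₃ + d * (A₁ * B₂ * B₃ + A₂ * B₃ * B₁ + A₃ * B₁ * B₂) = 24 := by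
    linarith [h3']
  have h4 : A₂ * A₃ * B₁ + A₃ * A₁ * B₂ + A₁ * A₂ * B₃ + d * (B₁ * B₂ * B₃) = 0 := h4'
  clear hextS hextP h3' h4' h2' hsum hprod hrC hsC htC hrxy hsxy htxy hA1 hB1 hA2 hB2 hA3 hB3
  clear hr hs ht hri hsi hti
  by_cases hB₁z : B₁ = 0
  · subst hB₁z
    have hres := aux15_caseR hd hd0 A₂ B₂ A₃ B₃ A₁ n₂ n₃ n₁ hn₂ hn₃
      (by linarith [hn₁]) (by linarith [h1]) (by linarith [h2])
      (by linear_combination h3) (by linear_combination h4)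
    tauto
  by_cases hB₂z : B₂ = 0
  · subst hB₂z
    have hres := aux15_caseR hd hd0 A₃ B₃ A₁ B₁ A₂ n₃ n₁ n₂ hn₃ hn₁
      (by linarith [hn₂]) (by linarith [h1]) (by linarith [h2])
      (by linear_combination h3) (by linear_combination h4)
    tauto
  by_cases hB₃z : B₃ = 0
  · subst hB₃z
    have hres := aux15_caseR hd hd0 A₁ B₁ A₂ B₂ A₃ n₁ n₂ n₃ hn₁ hn₂
      (by linarith [hn₃]) (by linarith [h1]) (by linarith [h2])
      (by linear_combination h3) (by linear_combination h4)
    tauto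
  -- all B nonzero : derive contradiction
  exfalso
  have hm : (A₁ ^ 2 - d * B₁ ^ 2) * ((A₂ ^ 2 - d * B₂ ^ 2) * (A₃ ^ 2 - d * B₃ ^ 2)) =
      (A₁ * A₂ * A₃ + d * (A₁ * B₂ * B₃ + A₂ * B₃ * B₁ + A₃ * B₁ * B₂)) ^ 2 -
      d * (A₂ * A₃ * B₁ + A₃ * A₁ * B₂ + A₁ * A₂ * B₃ + d * (B₁ * B₂ * B₃)) ^ 2 := by
    ring
  rw [hn₁, hn₂, hn₃, h3, h4] at hm
  have hprod9 : n₁ * n₂ * n₃ = 9 := by linarith [hm]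
  have hd1' : n₁ ∣ 9 := ⟨n₂ * n₃, by linarith [hprod9]⟩
  have hd2' : n₂ ∣ 9 := ⟨n₁ * n₃, by linarith [hprod9]⟩
  have hb1 : n₁ ≤ 9 := Int.le_of_dvd (by norm_num) hd1'
  have hb1' : -9 ≤ n₁ := by
    have := Int.le_of_dvd (show (0:ℤ) < 9 by norm_num) ((neg_dvd).mpr hd1')
    omega
  have hb2 : n₂ ≤ 9 := Int.le_of_dvd (by norm_num) hd2'
  have hb2' : -9 ≤ n₂ := by
    have := Int.le_of_dvd (show (0:ℤ) < 9 by norm_num) ((neg_dvd).mpr hd2')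
    omega
  have hv1 : n₁ = 1 ∨ n₁ = -1 ∨ n₁ = 3 ∨ n₁ = -3 ∨ n₁ = 9 ∨ n₁ = -9 := by
    clear hm hprod9 hd2' hb2 hb2'
    obtain ⟨k, hk⟩ := hd1'
    interval_cases n₁ <;> omega
  have hv2 : n₂ = 1 ∨ n₂ = -1 ∨ n₂ = 3 ∨ n₂ = -3 ∨ n₂ = 9 ∨ n₂ = -9 := by
    clear hm hprod9 hd1' hb1 hb1' hv1
    obtain ⟨k, hk⟩ := hd2'
    interval_cases n₂ <;> omega
  clear hm hd1' hd2' hb1 hb1' hb2 hb2'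
  rcases hv1 with hv1|hv1|hv1|hv1|hv1|hv1 <;> subst hv1 <;>
    (rcases hv2 with hv2|hv2|hv2|hv2|hv2|hv2 <;> subst hv2)
  -- n₁ = 1
  · have hv3 : n₃ = 9 := by omega
    subst hv3
    exact (aux15_P2 hd hd1 hα A₃ B₃ A₁ B₁ A₂ B₂ (9) (1) hn₃ hn₁ hn₂ hB₃z (by norm_num) (by linarith [h1]) (by linarith [h2]) (by linear_combination h3) (by linear_combination h4)).elim
  · have hv3 : n₃ = -9 := by omega
    subst hv3
    exact (aux15_P3a hd hd1 hα A₁ B₁ A₂ B₂ A₃ B₃ (by linarith [hn₁]) (by linarith [hn₃]) (by linarith [h1]) (by linarith [h2]) (by linear_combination h3) (by linear_combination h4)).elim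
  · have hv3 : n₃ = 3 := by omega
    subst hv3
    exact (aux15_P2 hd hd1 hα A₁ B₁ A₂ B₂ A₃ B₃ (1) (3) hn₁ hn₂ hn₃ hB₁z (by norm_num) (by linarith [h1]) (by linarith [h2]) (by linear_combination h3) (by linear_combination h4)).elim
  · have hv3 : n₃ = -3 := by omega
    subst hv3
    exact (aux15_P2 hd hd1 hα A₁ B₁ A₂ B₂ A₃ B₃ (1) (-3) hn₁ hn₂ hn₃ hB₁z (by norm_num) (by linarith [h1]) (by linarith [h2]) (by linear_combination h3) (by linear_combination h4)).elim
  · have hv3 : n₃ = 1 := by omega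
    subst hv3
    exact (aux15_P2 hd hd1 hα A₂ B₂ A₁ B₁ A₃ B₃ (9) (1) hn₂ hn₁ hn₃ hB₂z (by norm_num) (by linarith [h1]) (by linarith [h2]) (by linear_combination h3) (by linear_combination h4)).elim
  · have hv3 : n₃ = -1 := by omega
    subst hv3
    exact (aux15_P3a hd hd1 hα A₁ B₁ A₃ B₃ A₂ B₂ (by linarith [hn₁]) (by linarith [hn₂]) (by linarith [h1]) (by linarith [h2]) (by linear_combination h3) (by linear_combination h4)).elim
  -- n₁ = -1
  · have hv3 : n₃ = -9 := by omega
    subst hv3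
    exact (aux15_P3a hd hd1 hα A₂ B₂ A₁ B₁ A₃ B₃ (by linarith [hn₂]) (by linarith [hn₃]) (by linarith [h1]) (by linarith [h2]) (by linear_combination h3) (by linear_combination h4)).elim
  · have hv3 : n₃ = 9 := by omega
    subst hv3
    exact (aux15_P2 hd hd1 hα A₃ B₃ A₁ B₁ A₂ B₂ (9) (-1) hn₃ hn₁ hn₂ hB₃z (by norm_num) (by linarith [h1]) (by linarith [h2]) (by linear_combination h3) (by linear_combination h4)).elim
  · have hv3 : n₃ = -3 := by omega
    subst hv3
    exact (aux15_P3b hd hd1 hα A₁ B₁ A₂ B₂ A₃ B₃ (by linarith [hn₁]) (by linarith [hn₂]) (by linarith [hn₃]) (by linarith [h1]) (by linarith [h2]) (by linear_combination h3) (by linear_combination h4)).elim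
  · have hv3 : n₃ = 3 := by omega
    subst hv3
    exact (aux15_P3b hd hd1 hα A₁ B₁ A₃ B₃ A₂ B₂ (by linarith [hn₁]) (by linarith [hn₃]) (by linarith [hn₂]) (by linarith [h1]) (by linarith [h2]) (by linear_combination h3) (by linear_combination h4)).elim
  · have hv3 : n₃ = -1 := by omega
    subst hv3
    exact (aux15_P2 hd hd1 hα A₂ B₂ A₁ B₁ A₃ B₃ (9) (-1) hn₂ hn₁ hn₃ hB₂z (by norm_num) (by linarith [h1]) (by linarith [h2]) (by linear_combination h3) (by linear_combination h4)).elim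
  · have hv3 : n₃ = 1 := by omega
    subst hv3
    exact (aux15_P3a hd hd1 hα A₃ B₃ A₁ B₁ A₂ B₂ (by linarith [hn₃]) (by linarith [hn₂]) (by linarith [h1]) (by linarith [h2]) (by linear_combination h3) (by linear_combination h4)).elim
  -- n₁ = 3
  · have hv3 : n₃ = 3 := by omega
    subst hv3
    exact (aux15_P2 hd hd1 hα A₂ B₂ A₁ B₁ A₃ B₃ (1) (3) hn₂ hn₁ hn₃ hB₂z (by norm_num) (by linarith [h1]) (by linarith [h2]) (by linear_combination h3) (by linear_combination h4)).elim
  · have hv3 : n₃ = -3 := by omega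
    subst hv3
    exact (aux15_P3b hd hd1 hα A₂ B₂ A₁ B₁ A₃ B₃ (by linarith [hn₂]) (by linarith [hn₁]) (by linarith [hn₃]) (by linarith [h1]) (by linarith [h2]) (by linear_combination h3) (by linear_combination h4)).elim
  · have hv3 : n₃ = 1 := by omega
    subst hv3
    exact (aux15_P2 hd hd1 hα A₃ B₃ A₁ B₁ A₂ B₂ (1) (3) hn₃ hn₁ hn₂ hB₃z (by norm_num) (by linarith [h1]) (by linarith [h2]) (by linear_combination h3) (by linear_combination h4)).elim
  · have hv3 : n₃ = -1 := by omega
    subst hv3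
    exact (aux15_P3b hd hd1 hα A₃ B₃ A₁ B₁ A₂ B₂ (by linarith [hn₃]) (by linarith [hn₁]) (by linarith [hn₂]) (by linarith [h1]) (by linarith [h2]) (by linear_combination h3) (by linear_combination h4)).elim
  · omega
  · omega
  -- n₁ = -3
  · have hv3 : n₃ = -3 := by omega
    subst hv3
    exact (aux15_P2 hd hd1 hα A₂ B₂ A₁ B₁ A₃ B₃ (1) (-3) hn₂ hn₁ hn₃ hB₂z (by norm_num) (by linarith [h1]) (by linarith [h2]) (by linear_combination h3) (by linear_combination h4)).elim
  · have hv3 : n₃ = 3 := by omega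
    subst hv3
    exact (aux15_P3b hd hd1 hα A₂ B₂ A₃ B₃ A₁ B₁ (by linarith [hn₂]) (by linarith [hn₃]) (by linarith [hn₁]) (by linarith [h1]) (by linarith [h2]) (by linear_combination h3) (by linear_combination h4)).elim
  · have hv3 : n₃ = -1 := by omega
    subst hv3
    exact (aux15_P3b hd hd1 hα A₃ B₃ A₂ B₂ A₁ B₁ (by linarith [hn₃]) (by linarith [hn₂]) (by linarith [hn₁]) (by linarith [h1]) (by linarith [h2]) (by linear_combination h3) (by linear_combination h4)).elim
  · have hv3 : n₃ = 1 := by omega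
    subst hv3
    exact (aux15_P2 hd hd1 hα A₃ B₃ A₁ B₁ A₂ B₂ (1) (-3) hn₃ hn₁ hn₂ hB₃z (by norm_num) (by linarith [h1]) (by linarith [h2]) (by linear_combination h3) (by linear_combination h4)).elim
  · omega
  · omega
  -- n₁ = 9
  · have hv3 : n₃ = 1 := by omega
    subst hv3
    exact (aux15_P2 hd hd1 hα A₁ B₁ A₂ B₂ A₃ B₃ (9) (1) hn₁ hn₂ hn₃ hB₁z (by norm_num) (by linarith [h1]) (by linarith [h2]) (by linear_combination h3) (by linear_combination h4)).elim
  · have hv3 : n₃ = -1 := by omega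
    subst hv3
    exact (aux15_P2 hd hd1 hα A₁ B₁ A₂ B₂ A₃ B₃ (9) (-1) hn₁ hn₂ hn₃ hB₁z (by norm_num) (by linarith [h1]) (by linarith [h2]) (by linear_combination h3) (by linear_combination h4)).elim
  · omega
  · omega
  · omega
  · omega
  -- n₁ = -9
  · have hv3 : n₃ = -1 := by omega
    subst hv3
    exact (aux15_P3a hd hd1 hα A₂ B₂ A₃ B₃ A₁ B₁ (by linarith [hn₂]) (by linarith [hn₁]) (by linarith [h1]) (by linarith [h2]) (by linear_combination h3) (by linear_combination h4)).elim
  · have hv3 : n₃ = 1 := by omega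
    subst hv3
    exact (aux15_P3a hd hd1 hα A₃ B₃ A₂ B₂ A₁ B₁ (by linarith [hn₃]) (by linarith [hn₁]) (by linarith [h1]) (by linarith [h2]) (by linear_combination h3) (by linear_combination h4)).elim
  · omega
  · omega
  · omega
  · omega
end
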